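/- arXiv:1301.0102 — 2 statements merged into one kernel-verified Lean document; each statement's English description precedes it below -/
import Mathlib

section
/- Suppose that an edge xy in a connected, locally finite simple graph G is not contained in any cycle of length 3 or 4, that d_x = d_y = 3, and that xy is contained in at most one 5-cycle. Then κ(x,y) < 0. -/
set_option maxHeartbeats 1600000

open Filter Topology Classical SimpleGraph

noncomputable section

namespace RicciFlatPaper

variable {V : Type*}

/-- Degree as the natural cardinality of the neighbor set. -/
def deg (G : SimpleGraph V) (x : V) : ℕ := (G.neighborSet x).ncard

/-- The probability measure `m_x^α`: mass `α` at `x`, mass `(1-α)/d_x` at each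
neighbor of `x`, and `0` elsewhere. -/
def mass (G : SimpleGraph V) (α : ℝ) (x : V) : V → ℝ :=
  fun v => if v = x then α else if G.Adj x v then (1 - α) / (deg G x) else 0

/-- `A` is a (finitely supported, nonnegative) coupling between `m₁` and `m₂`. -/
def IsCoupling (m₁ m₂ : V → ℝ) (A : V → V → ℝ) : Prop :=
  (∀ u v, 0 ≤ A u v) ∧
  (Function.support (fun p : V × V => A p.1 p.2)).Finite ∧
  (∀ u, ∑ᶠ v, A u v = m₁ u) ∧ (∀ v, ∑ᶠ u, A u v = m₂ v)

/-- The transportation (Wasserstein) distance between two distributions,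
with respect to the graph distance of `G`. -/
def W (G : SimpleGraph V) (m₁ m₂ : V → ℝ) : ℝ :=
  sInf {c | ∃ A : V → V → ℝ, IsCoupling m₁ m₂ A ∧
    c = ∑ᶠ p : V × V, A p.1 p.2 * (G.dist p.1 p.2 : ℝ)}

/-- `κ_α(x,y) = 1 - W(m_x^α, m_y^α)`. -/
def kappaAlpha (G : SimpleGraph V) (α : ℝ) (x y : V) : ℝ :=
  1 - W G (mass G α x) (mass G α y)

/-- Lin–Lu–Yau Ricci curvature `κ(x,y) = lim_{α→1} κ_α(x,y)/(1-α)`. -/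
def ricci (G : SimpleGraph V) (x y : V) : ℝ :=
  limUnder (𝓝[<] (1 : ℝ)) (fun α => kappaAlpha G α x y / (1 - α))

/-- A graph is Ricci-flat if the Ricci curvature vanishes on every edge. -/
def RicciFlat (G : SimpleGraph V) : Prop := ∀ x y : V, G.Adj x y → ricci G x y = 0

/-- The edge `xy` lies on a cycle of length `n`. -/
def EdgeInCycleOfLength (G : SimpleGraph V) (x y : V) (n : ℕ) : Prop :=
  ∃ (v : V) (c : G.Walk v v), c.IsCycle ∧ c.length = n ∧ s(x, y) ∈ c.edges

lemma finsum_one (x : V) (r : ℝ) : ∑ᶠ v : V, (if v = x then r else 0) = r := by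
  rw [finsum_eq_single _ x (fun b hb => if_neg hb), if_pos rfl]

lemma finsum_two {x y : V} (hxy : x ≠ y) (r s : ℝ) :
    ∑ᶠ v : V, (if v = x then r else if v = y then s else 0) = r + s := by
  have h : (Function.support fun v : V => (if v = x then r else if v = y then s else 0)) ⊆
      ↑({x, y} : Finset V) := by
    intro v hv
    simp only [Function.mem_support] at hv
    by_contra hc
    simp only [Finset.coe_insert, Set.mem_insert_iff, Finset.coe_singleton,
      Set.mem_singleton_iff, not_or] at hc
    simp [hc.1, hc.2] at hv
  rw [finsum_eq_sum_of_support_subset _ h, Finset.sum_insert (by simpa using hxy),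
    Finset.sum_singleton, if_pos rfl, if_neg hxy.symm, if_pos rfl]

lemma mass_eval {G : SimpleGraph V} {x y a b : V} (α : ℝ)
    (hNx : G.neighborSet x = {y, a, b}) (hdx : deg G x = 3) (v : V) :
    mass G α x v = if v = x then α else if v = y ∨ v = a ∨ v = b then (1 - α) / 3 else 0 := by
  have hadj : G.Adj x v ↔ (v = y ∨ v = a ∨ v = b) := by
    rw [← SimpleGraph.mem_neighborSet, hNx]; simp
  simp [mass, hdx, hadj]



lemma cycle3 {G : SimpleGraph V} {x y z : V} (h1 : G.Adj x y) (h2 : G.Adj y z) (h3 : G.Adj z x) :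
    EdgeInCycleOfLength G x y 3 := by
  refine ⟨x, .cons h1 (.cons h2 (.cons h3 .nil)), ?_, by simp, by simp⟩
  simp [Walk.isCycle_def, Walk.isTrail_def, h1.ne, h2.ne, h3.ne, h1.ne', h2.ne', h3.ne']

lemma cycle4 {G : SimpleGraph V} {x y u v : V} (h1 : G.Adj x y) (h2 : G.Adj y u) (h3 : G.Adj u v)
    (h4 : G.Adj v x) (hxu : x ≠ u) (hyv : y ≠ v) :
    EdgeInCycleOfLength G x y 4 := by
  refine ⟨x, .cons h1 (.cons h2 (.cons h3 (.cons h4 .nil))), ?_, by simp, by simp⟩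
  simp [Walk.isCycle_def, Walk.isTrail_def, h1.ne, h2.ne, h3.ne, h4.ne, h1.ne', h2.ne',
    h3.ne', h4.ne', hxu, hyv, hxu.symm, hyv.symm, Sym2.eq_iff]

lemma cycle5 {G : SimpleGraph V} {x y u w v : V} (h1 : G.Adj y x) (h2 : G.Adj x u)
    (h3 : G.Adj u w) (h4 : G.Adj w v) (h5 : G.Adj v y)
    (hyu : y ≠ u) (hyw : y ≠ w) (hxw : x ≠ w) (hxv : x ≠ v) (huv : u ≠ v) :
    ∃ c : G.Walk y y, c.IsCycle ∧ c.length = 5 ∧ s(x, y) ∈ c.edges ∧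
      c.edges = [s(y,x), s(x,u), s(u,w), s(w,v), s(v,y)] := by
  refine ⟨.cons h1 (.cons h2 (.cons h3 (.cons h4 (.cons h5 .nil)))), ?_, by simp, ?_, by simp⟩
  · simp [Walk.isCycle_def, Walk.isTrail_def, h1.ne, h2.ne, h3.ne, h4.ne, h5.ne, h1.ne',
      h2.ne', h3.ne', h4.ne', h5.ne', hyu, hyw, hxw, hxv, huv, hyu.symm, hyw.symm, hxw.symm,
      hxv.symm, huv.symm, Sym2.eq_iff]
  · simp [Sym2.eq_swap]

lemma dist_eq_two {G : SimpleGraph V} (hconn : G.Connected) {u v w : V} (hne : u ≠ v)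
    (hn : ¬ G.Adj u v) (h1 : G.Adj u w) (h2 : G.Adj w v) : G.dist u v = 2 := by
  have hle : G.dist u v ≤ 2 := by
    simpa using SimpleGraph.dist_le (Walk.cons h1 (Walk.cons h2 Walk.nil))
  have h0 : G.dist u v ≠ 0 := (hconn.pos_dist_of_ne hne).ne'
  have h1' : G.dist u v ≠ 1 := fun h => hn (dist_eq_one_iff_adj.mp h)
  omega

lemma exists_mid_of_dist_eq_two {G : SimpleGraph V} (hconn : G.Connected) {u v : V}
    (h : G.dist u v = 2) : ∃ w, G.Adj u w ∧ G.Adj w v := by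
  obtain ⟨p, hp⟩ := (hconn u v).exists_walk_length_eq_dist
  rw [h] at hp
  match p, hp with
  | .cons h1 q, hp =>
    match q, hp with
    | .cons h2 r, hp =>
      have : r.length = 0 := by simpa using hp
      exact ⟨_, h1, (Walk.eq_of_length_eq_zero this) ▸ h2⟩

lemma dist_eq_three {G : SimpleGraph V} (hconn : G.Connected) {u v : V} (hne : u ≠ v)
    (hn : ¬ G.Adj u v) (hn2 : ¬ ∃ w, G.Adj u w ∧ G.Adj w v)
    {p q : V} (h1 : G.Adj u p) (h2 : G.Adj p q) (h3 : G.Adj q v) : G.dist u v = 3 := by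
  have hle : G.dist u v ≤ 3 := by
    simpa using SimpleGraph.dist_le (Walk.cons h1 (Walk.cons h2 (Walk.cons h3 Walk.nil)))
  have h0 : G.dist u v ≠ 0 := (hconn.pos_dist_of_ne hne).ne'
  have h1' : G.dist u v ≠ 1 := fun h => hn (dist_eq_one_iff_adj.mp h)
  have h2' : G.dist u v ≠ 2 := fun h => hn2 (exists_mid_of_dist_eq_two hconn h)
  omega

lemma pair_unique {G : SimpleGraph V} {x y u v u' v' w w' : V}
    (hC5 : ∀ (p q : V) (c₁ : G.Walk p p) (c₂ : G.Walk q q),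
      c₁.IsCycle → c₁.length = 5 → s(x, y) ∈ c₁.edges →
      c₂.IsCycle → c₂.length = 5 → s(x, y) ∈ c₂.edges →
      {e : Sym2 V | e ∈ c₁.edges} = {e : Sym2 V | e ∈ c₂.edges})
    (hxy : G.Adj x y)
    (nca : ∀ z, G.Adj x z → ¬ G.Adj y z)
    (hu : G.Adj x u) (hv : G.Adj y v) (hu' : G.Adj x u') (hv' : G.Adj y v')
    (huy : u ≠ y) (hvx : v ≠ x) (hu'y : u' ≠ y) (hv'x : v' ≠ x)
    (hw1 : G.Adj u w) (hw2 : G.Adj w v) (hw1' : G.Adj u' w') (hw2' : G.Adj w' v') :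
    u = u' ∧ v = v' := by
  have hyw : y ≠ w := fun h => nca u hu (h ▸ hw1).symm
  have hxw : x ≠ w := fun h => nca v (h ▸ hw2) hv
  have huv : u ≠ v := fun h => nca u hu (h ▸ hv)
  have hyw' : y ≠ w' := fun h => nca u' hu' (h ▸ hw1').symm
  have hxw' : x ≠ w' := fun h => nca v' (h ▸ hw2') hv'
  have hu'v' : u' ≠ v' := fun h => nca u' hu' (h ▸ hv')
  obtain ⟨c1, hc1cyc, hc1len, hc1mem, hc1e⟩ :=
    cycle5 hxy.symm hu hw1 hw2 hv.symm huy.symm hyw hxw hvx.symm huv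
  obtain ⟨c2, hc2cyc, hc2len, hc2mem, hc2e⟩ :=
    cycle5 hxy.symm hu' hw1' hw2' hv'.symm hu'y.symm hyw' hxw' hv'x.symm hu'v'
  have heq := hC5 y y c1 c2 hc1cyc hc1len hc1mem hc2cyc hc2len hc2mem
  have hxu' : x ≠ u' := hu'.ne
  have hxv' : x ≠ v' := hv'x.symm
  have hyv' : y ≠ v' := hv'.ne
  have hyu' : y ≠ u' := hu'y.symm
  have hxy' : x ≠ y := hxy.ne
  constructor
  · have h1 : s(x, u) ∈ c2.edges := by
      have := (Set.ext_iff.mp heq s(x, u)).mp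
      simp only [Set.mem_setOf_eq] at this
      apply this
      rw [hc1e]; simp
    rw [hc2e] at h1
    simp only [List.mem_cons, List.not_mem_nil, or_false, Sym2.eq_iff] at h1
    simpa [hxy', huy, hxu', hxw', hxv'] using h1
  · have h1 : s(v, y) ∈ c2.edges := by
      have := (Set.ext_iff.mp heq s(v, y)).mp
      simp only [Set.mem_setOf_eq] at this
      apply this
      rw [hc1e]; simp
    rw [hc2e] at h1
    simp only [List.mem_cons, List.not_mem_nil, or_false, Sym2.eq_iff] at h1
    simpa [hvx, hv.ne', hxy'.symm, hyu', hyw', hyv'] using h1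

theorem main_lemma (G : SimpleGraph V) (hconn : G.Connected) {x y a b c d : V}
    (hxy : G.Adj x y)
    (hNx : G.neighborSet x = {y, a, b}) (hdx : deg G x = 3)
    (hNy : G.neighborSet y = {x, c, d}) (hdy : deg G y = 3)
    (hab : a ≠ b) (hcd : c ≠ d)
    (hay : G.dist a y = 2) (hby : G.dist b y = 2)
    (hxc : G.dist x c = 2) (hxd : G.dist x d = 2)
    (had : G.dist a d = 3) (hbc : G.dist b c = 3) (hbd : G.dist b d = 3)
    (hac2 : 2 ≤ G.dist a c) (hac3 : G.dist a c ≤ 3) :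
    ricci G x y < 0 := by
  classical
  have hxa : G.Adj x a := by rw [← SimpleGraph.mem_neighborSet, hNx]; simp
  have hxb : G.Adj x b := by rw [← SimpleGraph.mem_neighborSet, hNx]; simp
  have hyc : G.Adj y c := by rw [← SimpleGraph.mem_neighborSet, hNy]; simp
  have hyd : G.Adj y d := by rw [← SimpleGraph.mem_neighborSet, hNy]; simp
  set D : ℕ := G.dist a c with hD
  -- distinctness
  have nxy : x ≠ y := hxy.ne
  have nxa : x ≠ a := hxa.ne
  have nxb : x ≠ b := hxb.ne
  have nya : y ≠ a := fun h => by rw [← h] at hay; simp [SimpleGraph.dist_self] at hay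
  have nyb : y ≠ b := fun h => by rw [← h] at hby; simp [SimpleGraph.dist_self] at hby
  have nxc : x ≠ c := fun h => by rw [← h] at hxc; simp [SimpleGraph.dist_self] at hxc
  have nxd : x ≠ d := fun h => by rw [← h] at hxd; simp [SimpleGraph.dist_self] at hxd
  have nyc : y ≠ c := hyc.ne
  have nyd : y ≠ d := hyd.ne
  have nac : a ≠ c := fun h => by rw [h] at hD; rw [SimpleGraph.dist_self] at hD; omega
  have nad : a ≠ d := fun h => by rw [h] at had; simp [SimpleGraph.dist_self] at had
  have nbc : b ≠ c := fun h => by rw [h] at hbc; simp [SimpleGraph.dist_self] at hbc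
  have nbd : b ≠ d := fun h => by rw [h] at hbd; simp [SimpleGraph.dist_self] at hbd
  -- distances
  have dxx : G.dist x x = 0 := SimpleGraph.dist_self
  have dyy : G.dist y y = 0 := SimpleGraph.dist_self
  have dxy : G.dist x y = 1 := dist_eq_one_iff_adj.mpr hxy
  have dax : G.dist a x = 1 := dist_eq_one_iff_adj.mpr hxa.symm
  have dbx : G.dist b x = 1 := dist_eq_one_iff_adj.mpr hxb.symm
  have daa : G.dist a a = 0 := SimpleGraph.dist_self
  have dbb : G.dist b b = 0 := SimpleGraph.dist_self
  have dxa : G.dist x a = 1 := dist_eq_one_iff_adj.mpr hxa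
  have dxb : G.dist x b = 1 := dist_eq_one_iff_adj.mpr hxb
  have hDge : (2:ℝ) ≤ (D:ℝ) := by exact_mod_cast hac2
  have hDle : ((D:ℝ)) ≤ 3 := by exact_mod_cast hac3
  -- the Lipschitz function
  set f : V → ℝ := fun v =>
    max (1 - (G.dist x v : ℝ)) (max (2 - (G.dist a v : ℝ)) (2 - (G.dist b v : ℝ))) with hf
  have hLip : ∀ u v, f u - f v ≤ (G.dist u v : ℝ) := by
    intro u v
    rw [sub_le_iff_le_add]
    have tri : ∀ s : V, (G.dist s v : ℝ) ≤ (G.dist s u : ℝ) + (G.dist u v : ℝ) := by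
      intro s; exact_mod_cast hconn.dist_triangle
    have m1 : 1 - (G.dist x v : ℝ) ≤ f v := le_max_left _ _
    have m2 : 2 - (G.dist a v : ℝ) ≤ f v := le_trans (le_max_left _ _) (le_max_right _ _)
    have m3 : 2 - (G.dist b v : ℝ) ≤ f v := le_trans (le_max_right _ _) (le_max_right _ _)
    refine max_le (by linarith [tri x]) (max_le (by linarith [tri a]) (by linarith [tri b]))
  have fnn : ∀ s u : V, (0:ℝ) ≤ (G.dist s u : ℝ) := fun s u => Nat.cast_nonneg _
  have fx : f x = 1 := by
    rw [hf]; simp only [dxx, dax, dbx]; norm_num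
  have fy : f y = 0 := by
    rw [hf]; simp only [dxy, hay, hby]; norm_num
  have fa : f a = 2 := by
    refine le_antisymm (max_le ?_ (max_le ?_ ?_)) ?_
    · rw [dxa]; norm_num
    · rw [daa]; norm_num
    · linarith [fnn b a]
    · have : 2 - (G.dist a a : ℝ) ≤ f a := le_trans (le_max_left _ _) (le_max_right _ _)
      rw [daa] at this; simpa using this
  have fb : f b = 2 := by
    refine le_antisymm (max_le ?_ (max_le ?_ ?_)) ?_
    · rw [dxb]; norm_num
    · linarith [fnn a b]
    · rw [dbb]; norm_num
    · have : 2 - (G.dist b b : ℝ) ≤ f b := le_trans (le_max_right _ _) (le_max_right _ _)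
      rw [dbb] at this; simpa using this
  have fc : f c = 2 - (D:ℝ) := by
    refine le_antisymm (max_le ?_ (max_le ?_ ?_)) ?_
    · rw [hxc]; push_cast; linarith
    · rw [← hD]
    · rw [hbc]; push_cast; linarith
    · exact le_trans (le_of_eq (by rw [← hD])) (le_trans (le_max_left _ _) (le_max_right _ _))
  have fd : f d = -1 := by
    refine le_antisymm (max_le ?_ (max_le ?_ ?_)) ?_
    · rw [hxd]; norm_num
    · rw [had]; norm_num
    · rw [hbd]; norm_num
    · have : 1 - (G.dist x d : ℝ) ≤ f d := le_max_left _ _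
      rw [hxd] at this; push_cast at this; linarith

  -- exact value of W
  have Wval : ∀ α : ℝ, α ∈ Set.Ioo (1/2 : ℝ) 1 →
      W G (mass G α x) (mass G α y) = α + (2 + (D:ℝ)) * ((1 - α)/3) := by
    intro α hα
    obtain ⟨hα1, hα2⟩ := hα
    set ε : ℝ := (1 - α)/3 with hε
    have hε0 : 0 ≤ ε := by rw [hε]; linarith
    have hαε : 0 ≤ α - ε := by rw [hε]; linarith
    set A : V → V → ℝ := fun u v =>
      if u = x ∧ v = x then ε else if u = x ∧ v = y then α - ε
      else if u = y ∧ v = y then ε else if u = a ∧ v = c then ε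
      else if u = b ∧ v = d then ε else 0 with hA
    have hcoup : IsCoupling (mass G α x) (mass G α y) A := by
      refine ⟨?_, ?_, ?_, ?_⟩
      · intro u v; rw [hA]; dsimp only; split_ifs <;> linarith
      · apply Set.Finite.subset (({((x,x) : V × V),(x,y),(y,y),(a,c),(b,d)} : Finset (V × V)).finite_toSet)
        intro p hp
        obtain ⟨u, v⟩ := p
        simp only [Function.mem_support] at hp
        by_contra hc
        simp only [Finset.coe_insert, Set.mem_insert_iff, Finset.coe_singleton,
          Set.mem_singleton_iff, Prod.mk.injEq, not_or] at hc
        apply hp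
        rw [hA]; dsimp only
        rw [if_neg (by tauto), if_neg (by tauto), if_neg (by tauto), if_neg (by tauto),
          if_neg (by tauto)]
      · intro u
        by_cases hux : u = x
        · subst hux
          have hrow : ∀ v : V, A u v = if v = u then ε else if v = y then α - ε else 0 := by
            intro v; rw [hA]; dsimp only
            by_cases h1 : v = u
            · simp [h1]
            · by_cases h2 : v = y
              · simp [h1, h2, nxy, nxy, nxa, nxb, nya, nyb, nyc, nyd, nxc, nxd, nac, nad, nbc, nbd, hab, hcd, nxy.symm, nxa.symm, nxb.symm, nya.symm, nyb.symm, nyc.symm, nyd.symm, nxc.symm, nxd.symm, nac.symm, nad.symm, nbc.symm, nbd.symm, hab.symm, hcd.symm]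
              · simp [h1, h2, nxy, nxa, nxb, nxy, nxa, nxb, nya, nyb, nyc, nyd, nxc, nxd, nac, nad, nbc, nbd, hab, hcd, nxy.symm, nxa.symm, nxb.symm, nya.symm, nyb.symm, nyc.symm, nyd.symm, nxc.symm, nxd.symm, nac.symm, nad.symm, nbc.symm, nbd.symm, hab.symm, hcd.symm]
          simp only [hrow]
          rw [finsum_two nxy, mass_eval α hNx hdx, if_pos rfl]
          rw [hε]; ring
        · by_cases huy : u = y
          · subst huy
            have hrow : ∀ v : V, A u v = if v = u then ε else 0 := by
              intro v; rw [hA]; dsimp only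
              by_cases h1 : v = u
              · simp [h1, nxy.symm, nxy, nxy, nxa, nxb, nya, nyb, nyc, nyd, nxc, nxd, nac, nad, nbc, nbd, hab, hcd, nxy.symm, nxa.symm, nxb.symm, nya.symm, nyb.symm, nyc.symm, nyd.symm, nxc.symm, nxd.symm, nac.symm, nad.symm, nbc.symm, nbd.symm, hab.symm, hcd.symm]
              · simp [h1, nxy.symm, nya.symm, nyb.symm, nxy, nxa, nxb, nya, nyb, nyc, nyd, nxc, nxd, nac, nad, nbc, nbd, hab, hcd, nxy.symm, nxa.symm, nxb.symm, nya.symm, nyb.symm, nyc.symm, nyd.symm, nxc.symm, nxd.symm, nac.symm, nad.symm, nbc.symm, nbd.symm, hab.symm, hcd.symm]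
            simp only [hrow]
            rw [finsum_one, mass_eval α hNx hdx, if_neg nxy.symm, if_pos (Or.inl rfl), hε]
          · by_cases hua : u = a
            · subst hua
              have hrow : ∀ v : V, A u v = if v = c then ε else 0 := by
                intro v; rw [hA]; dsimp only
                by_cases h1 : v = c
                · simp [h1, nxa.symm, nya.symm, nxc.symm, nyc.symm, nxy, nxa, nxb, nya, nyb, nyc, nyd, nxc, nxd, nac, nad, nbc, nbd, hab, hcd, nxy.symm, nxa.symm, nxb.symm, nya.symm, nyb.symm, nyc.symm, nyd.symm, nxc.symm, nxd.symm, nac.symm, nad.symm, nbc.symm, nbd.symm, hab.symm, hcd.symm]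
                · simp [h1, nxa.symm, nya.symm, hab, nxy, nxa, nxb, nya, nyb, nyc, nyd, nxc, nxd, nac, nad, nbc, nbd, hab, hcd, nxy.symm, nxa.symm, nxb.symm, nya.symm, nyb.symm, nyc.symm, nyd.symm, nxc.symm, nxd.symm, nac.symm, nad.symm, nbc.symm, nbd.symm, hab.symm, hcd.symm]
              simp only [hrow]
              rw [finsum_one, mass_eval α hNx hdx, if_neg nxa.symm,
                if_pos (Or.inr (Or.inl rfl)), hε]
            · by_cases hub : u = b
              · subst hub
                have hrow : ∀ v : V, A u v = if v = d then ε else 0 := by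
                  intro v; rw [hA]; dsimp only
                  by_cases h1 : v = d
                  · simp [h1, nxb.symm, nyb.symm, hab.symm, nxd.symm, nyd.symm, nxy, nxa, nxb, nya, nyb, nyc, nyd, nxc, nxd, nac, nad, nbc, nbd, hab, hcd, nxy.symm, nxa.symm, nxb.symm, nya.symm, nyb.symm, nyc.symm, nyd.symm, nxc.symm, nxd.symm, nac.symm, nad.symm, nbc.symm, nbd.symm, hab.symm, hcd.symm]
                  · simp [h1, nxb.symm, nyb.symm, hab.symm, nxy, nxa, nxb, nya, nyb, nyc, nyd, nxc, nxd, nac, nad, nbc, nbd, hab, hcd, nxy.symm, nxa.symm, nxb.symm, nya.symm, nyb.symm, nyc.symm, nyd.symm, nxc.symm, nxd.symm, nac.symm, nad.symm, nbc.symm, nbd.symm, hab.symm, hcd.symm]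
                simp only [hrow]
                rw [finsum_one, mass_eval α hNx hdx, if_neg nxb.symm,
                  if_pos (Or.inr (Or.inr rfl)), hε]
              · have hrow : ∀ v : V, A u v = 0 := by
                  intro v; rw [hA]; dsimp only
                  simp [hux, huy, hua, hub, nxy, nxa, nxb, nya, nyb, nyc, nyd, nxc, nxd, nac, nad, nbc, nbd, hab, hcd, nxy.symm, nxa.symm, nxb.symm, nya.symm, nyb.symm, nyc.symm, nyd.symm, nxc.symm, nxd.symm, nac.symm, nad.symm, nbc.symm, nbd.symm, hab.symm, hcd.symm]
                simp only [hrow]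
                rw [finsum_zero, mass_eval α hNx hdx, if_neg hux, if_neg (by tauto)]
      · intro v
        by_cases hvx : v = x
        · subst hvx
          have hcol : ∀ u : V, A u v = if u = v then ε else 0 := by
            intro u; rw [hA]; dsimp only
            by_cases h1 : u = v
            · simp [h1]
            · simp [h1, nxy, nxa, nxb, nya, nyb, nyc, nyd, nxc, nxd, nac, nad, nbc, nbd, hab, hcd, nxy.symm, nxa.symm, nxb.symm, nya.symm, nyb.symm, nyc.symm, nyd.symm, nxc.symm, nxd.symm, nac.symm, nad.symm, nbc.symm, nbd.symm, hab.symm, hcd.symm]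
          simp only [hcol]
          rw [finsum_one, mass_eval α hNy hdy, if_neg nxy, if_pos (Or.inl rfl), hε]
        · by_cases hvy : v = y
          · subst hvy
            have hcol : ∀ u : V, A u v = if u = x then α - ε else if u = v then ε else 0 := by
              intro u; rw [hA]; dsimp only
              by_cases h1 : u = x
              · simp [h1, nxy.symm, nxy, nxa, nxb, nya, nyb, nyc, nyd, nxc, nxd, nac, nad, nbc, nbd, hab, hcd, nxy.symm, nxa.symm, nxb.symm, nya.symm, nyb.symm, nyc.symm, nyd.symm, nxc.symm, nxd.symm, nac.symm, nad.symm, nbc.symm, nbd.symm, hab.symm, hcd.symm]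
              · by_cases h2 : u = v
                · simp [h1, h2, nxy.symm, nxy, nxa, nxb, nya, nyb, nyc, nyd, nxc, nxd, nac, nad, nbc, nbd, hab, hcd, nxy.symm, nxa.symm, nxb.symm, nya.symm, nyb.symm, nyc.symm, nyd.symm, nxc.symm, nxd.symm, nac.symm, nad.symm, nbc.symm, nbd.symm, hab.symm, hcd.symm]
                · simp [h1, h2, nxy.symm, nyc, nyd, nxy, nxa, nxb, nya, nyb, nyc, nyd, nxc, nxd, nac, nad, nbc, nbd, hab, hcd, nxy.symm, nxa.symm, nxb.symm, nya.symm, nyb.symm, nyc.symm, nyd.symm, nxc.symm, nxd.symm, nac.symm, nad.symm, nbc.symm, nbd.symm, hab.symm, hcd.symm]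
            simp only [hcol]
            rw [finsum_two nxy, mass_eval α hNy hdy, if_pos rfl]
            ring
          · by_cases hvc : v = c
            · subst hvc
              have hcol : ∀ u : V, A u v = if u = a then ε else 0 := by
                intro u; rw [hA]; dsimp only
                by_cases h1 : u = a
                · simp [h1, nxc.symm, nyc.symm, nac.symm, nxy, nxa, nxb, nya, nyb, nyc, nyd, nxc, nxd, nac, nad, nbc, nbd, hab, hcd, nxy.symm, nxa.symm, nxb.symm, nya.symm, nyb.symm, nyc.symm, nyd.symm, nxc.symm, nxd.symm, nac.symm, nad.symm, nbc.symm, nbd.symm, hab.symm, hcd.symm]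
                · simp [h1, nxc.symm, nyc.symm, hcd, nxy, nxa, nxb, nya, nyb, nyc, nyd, nxc, nxd, nac, nad, nbc, nbd, hab, hcd, nxy.symm, nxa.symm, nxb.symm, nya.symm, nyb.symm, nyc.symm, nyd.symm, nxc.symm, nxd.symm, nac.symm, nad.symm, nbc.symm, nbd.symm, hab.symm, hcd.symm]
              simp only [hcol]
              rw [finsum_one, mass_eval α hNy hdy, if_neg nyc.symm,
                if_pos (Or.inr (Or.inl rfl)), hε]
            · by_cases hvd : v = d
              · subst hvd
                have hcol : ∀ u : V, A u v = if u = b then ε else 0 := by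
                  intro u; rw [hA]; dsimp only
                  by_cases h1 : u = b
                  · simp [h1, nxd.symm, nyd.symm, hcd.symm, nbd.symm, nxy, nxa, nxb, nya, nyb, nyc, nyd, nxc, nxd, nac, nad, nbc, nbd, hab, hcd, nxy.symm, nxa.symm, nxb.symm, nya.symm, nyb.symm, nyc.symm, nyd.symm, nxc.symm, nxd.symm, nac.symm, nad.symm, nbc.symm, nbd.symm, hab.symm, hcd.symm]
                  · simp [h1, nxd.symm, nyd.symm, hcd.symm, nxy, nxa, nxb, nya, nyb, nyc, nyd, nxc, nxd, nac, nad, nbc, nbd, hab, hcd, nxy.symm, nxa.symm, nxb.symm, nya.symm, nyb.symm, nyc.symm, nyd.symm, nxc.symm, nxd.symm, nac.symm, nad.symm, nbc.symm, nbd.symm, hab.symm, hcd.symm]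
                simp only [hcol]
                rw [finsum_one, mass_eval α hNy hdy, if_neg nyd.symm,
                  if_pos (Or.inr (Or.inr rfl)), hε]
              · have hcol : ∀ u : V, A u v = 0 := by
                  intro u; rw [hA]; dsimp only
                  simp [hvx, hvy, hvc, hvd, nxy, nxa, nxb, nya, nyb, nyc, nyd, nxc, nxd, nac, nad, nbc, nbd, hab, hcd, nxy.symm, nxa.symm, nxb.symm, nya.symm, nyb.symm, nyc.symm, nyd.symm, nxc.symm, nxd.symm, nac.symm, nad.symm, nbc.symm, nbd.symm, hab.symm, hcd.symm]
                simp only [hcol]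
                rw [finsum_zero, mass_eval α hNy hdy, if_neg hvy, if_neg (by tauto)]
    have hcost : ∑ᶠ p : V × V, A p.1 p.2 * (G.dist p.1 p.2 : ℝ) = α + (2 + (D:ℝ)) * ε := by
      have hsub : (Function.support fun p : V × V => A p.1 p.2 * (G.dist p.1 p.2 : ℝ)) ⊆
          ↑({(x,x),(x,y),(y,y),(a,c),(b,d)} : Finset (V × V)) := by
        intro p hp
        obtain ⟨u, v⟩ := p
        simp only [Function.mem_support] at hp
        by_contra hc
        simp only [Finset.coe_insert, Set.mem_insert_iff, Finset.coe_singleton,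
          Set.mem_singleton_iff, Prod.mk.injEq, not_or] at hc
        apply hp
        rw [hA]; dsimp only
        rw [if_neg (by tauto), if_neg (by tauto), if_neg (by tauto), if_neg (by tauto),
          if_neg (by tauto)]
        ring
      rw [finsum_eq_sum_of_support_subset _ hsub]
      have hA1 : A x x = ε := by rw [hA]; simp
      have hA2 : A x y = α - ε := by rw [hA]; simp [nxy, nxy.symm]
      have hA3 : A y y = ε := by rw [hA]; simp [nxy.symm]
      have hA4 : A a c = ε := by rw [hA]; simp [nxa.symm, nya.symm, nxc.symm, nyc.symm]
      have hA5 : A b d = ε := by rw [hA]; simp [nxb.symm, nyb.symm, hab.symm, nxd.symm, nyd.symm, hcd.symm]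
      rw [Finset.sum_insert (by simp [Prod.mk.injEq, nxy, nxa, nxb, nxc.symm]),
        Finset.sum_insert (by simp [Prod.mk.injEq, nxy, nxa, nxb, nya, nyb]),
        Finset.sum_insert (by simp [Prod.mk.injEq, nya.symm, nyb.symm, nyc, nyd]),
        Finset.sum_insert (by simp [Prod.mk.injEq, hab, hcd]),
        Finset.sum_singleton]
      rw [hA1, hA2, hA3, hA4, hA5, dxx, dxy, dyy, ← hD, hbd]
      push_cast
      ring
    have hWle : W G (mass G α x) (mass G α y) ≤ α + (2 + (D:ℝ)) * ε := by
      rw [W]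
      rw [← hcost]
      apply csInf_le
      · refine ⟨0, ?_⟩
        rintro r ⟨B, hB, rfl⟩
        apply finsum_nonneg
        intro p
        exact mul_nonneg (hB.1 _ _) (Nat.cast_nonneg _)
      · exact ⟨A, hcoup, rfl⟩
    have hWge : α + (2 + (D:ℝ)) * ε ≤ W G (mass G α x) (mass G α y) := by
      rw [W]
      refine le_csInf ⟨_, A, hcoup, rfl⟩ ?_
      rintro r ⟨B, hB, rfl⟩
      obtain ⟨hB0, hBfin, hBrow, hBcol⟩ := hB
      set S : Finset (V × V) := hBfin.toFinset with hS
      set T : Finset V := S.image Prod.fst ∪ S.image Prod.snd ∪ {x, y, a, b, c, d} with hT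
      have hmemS : ∀ {u v : V}, B u v ≠ 0 → (u, v) ∈ S := by
        intro u v h
        rw [hS, Set.Finite.mem_toFinset]
        exact h
      have hsubXY : ({x, y, a, b} : Finset V) ⊆ T ∧ ({x, y, c, d} : Finset V) ⊆ T := by
        constructor <;>
          · intro t ht
            rw [hT]
            apply Finset.mem_union_right
            simp only [Finset.mem_insert, Finset.mem_singleton] at ht ⊢
            tauto
      have hc1 : ∑ᶠ p : V × V, B p.1 p.2 * (G.dist p.1 p.2 : ℝ)
          = ∑ p ∈ T ×ˢ T, B p.1 p.2 * (G.dist p.1 p.2 : ℝ) := by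
        apply finsum_eq_sum_of_support_subset
        intro p hp
        simp only [Function.mem_support] at hp
        have hBp : B p.1 p.2 ≠ 0 := fun h => hp (by rw [h]; ring)
        have hpS : (p.1, p.2) ∈ S := hmemS hBp
        apply Finset.mem_coe.mpr
        rw [Finset.mem_product]
        constructor
        · exact Finset.mem_union_left _ (Finset.mem_union_left _
            (Finset.mem_image.mpr ⟨(p.1, p.2), hpS, rfl⟩))
        · exact Finset.mem_union_left _ (Finset.mem_union_right _
            (Finset.mem_image.mpr ⟨(p.1, p.2), hpS, rfl⟩))
      have hrowT : ∀ u : V, ∑ v ∈ T, B u v = mass G α x u := by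
        intro u
        rw [← hBrow u]
        symm
        apply finsum_eq_sum_of_support_subset
        intro v hv
        simp only [Function.mem_support] at hv
        exact Finset.mem_coe.mpr (Finset.mem_union_left _ (Finset.mem_union_right _
          (Finset.mem_image.mpr ⟨(u, v), hmemS hv, rfl⟩)))
      have hcolT : ∀ v : V, ∑ u ∈ T, B u v = mass G α y v := by
        intro v
        rw [← hBcol v]
        symm
        apply finsum_eq_sum_of_support_subset
        intro u hu
        simp only [Function.mem_support] at hu
        exact Finset.mem_coe.mpr (Finset.mem_union_left _ (Finset.mem_union_left _
          (Finset.mem_image.mpr ⟨(u, v), hmemS hu, rfl⟩)))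
      have step1 : ∑ p ∈ T ×ˢ T, B p.1 p.2 * (f p.1 - f p.2)
          ≤ ∑ p ∈ T ×ˢ T, B p.1 p.2 * (G.dist p.1 p.2 : ℝ) :=
        Finset.sum_le_sum (fun p _ => mul_le_mul_of_nonneg_left (hLip p.1 p.2) (hB0 p.1 p.2))
      have expand : ∑ p ∈ T ×ˢ T, B p.1 p.2 * (f p.1 - f p.2)
          = (∑ u ∈ T, mass G α x u * f u) - (∑ v ∈ T, mass G α y v * f v) := by
        rw [Finset.sum_product]
        have hstep : ∀ u ∈ T, ∑ v ∈ T, B u v * (f u - f v)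
            = mass G α x u * f u - ∑ v ∈ T, B u v * f v := by
          intro u _
          simp_rw [mul_sub]
          rw [Finset.sum_sub_distrib, ← Finset.sum_mul, hrowT u]
        rw [Finset.sum_congr rfl hstep, Finset.sum_sub_distrib]
        congr 1
        rw [Finset.sum_comm]
        apply Finset.sum_congr rfl
        intro v _
        rw [← Finset.sum_mul, hcolT v]
      have e1 : ∑ u ∈ T, mass G α x u * f u = α + 4 * ((1 - α) / 3) := by
        rw [← Finset.sum_subset hsubXY.1 (fun u _ hu => ?_)]
        · rw [Finset.sum_insert (by simp [nxy, nxa, nxb]),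
            Finset.sum_insert (by simp [nya, nyb]),
            Finset.sum_insert (by simp [hab]), Finset.sum_singleton,
            fx, fy, fa, fb, mass_eval α hNx hdx, mass_eval α hNx hdx,
            mass_eval α hNx hdx, mass_eval α hNx hdx, if_pos rfl, if_neg nxy.symm,
            if_pos (Or.inl rfl), if_neg nxa.symm, if_pos (Or.inr (Or.inl rfl)),
            if_neg nxb.symm, if_pos (Or.inr (Or.inr rfl))]
          ring
        · simp only [Finset.mem_insert, Finset.mem_singleton, not_or] at hu
          rw [mass_eval α hNx hdx, if_neg hu.1, if_neg (by tauto)]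
          ring
      have e2 : ∑ v ∈ T, mass G α y v * f v = (2 - (D:ℝ)) * ((1 - α) / 3) := by
        rw [← Finset.sum_subset hsubXY.2 (fun v _ hv => ?_)]
        · rw [Finset.sum_insert (by simp [nxy, nxc, nxd]),
            Finset.sum_insert (by simp [nyc, nyd]),
            Finset.sum_insert (by simp [hcd]), Finset.sum_singleton,
            fx, fy, fc, fd, mass_eval α hNy hdy, mass_eval α hNy hdy,
            mass_eval α hNy hdy, mass_eval α hNy hdy, if_neg nxy, if_pos (Or.inl rfl),
            if_pos rfl, if_neg nyc.symm, if_pos (Or.inr (Or.inl rfl)),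
            if_neg nyd.symm, if_pos (Or.inr (Or.inr rfl))]
          ring
        · simp only [Finset.mem_insert, Finset.mem_singleton, not_or] at hv
          rw [mass_eval α hNy hdy, if_neg hv.2.1, if_neg (by tauto)]
          ring
      calc α + (2 + (D:ℝ)) * ε = (α + 4 * ((1 - α) / 3)) - (2 - (D:ℝ)) * ((1 - α) / 3) := by
            rw [hε]; ring
        _ = (∑ u ∈ T, mass G α x u * f u) - (∑ v ∈ T, mass G α y v * f v) := by
            rw [e1, e2]
        _ = ∑ p ∈ T ×ˢ T, B p.1 p.2 * (f p.1 - f p.2) := expand.symm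
        _ ≤ ∑ p ∈ T ×ˢ T, B p.1 p.2 * (G.dist p.1 p.2 : ℝ) := step1
        _ = ∑ᶠ p : V × V, B p.1 p.2 * (G.dist p.1 p.2 : ℝ) := hc1.symm
    linarith [hWle, hWge]
  -- conclusion
  have hIoo : Set.Ioo (1/2 : ℝ) 1 ∈ 𝓝[<] (1:ℝ) := Ioo_mem_nhdsLT_of_mem (by norm_num)
  have hlim : Tendsto (fun α => kappaAlpha G α x y / (1 - α)) (𝓝[<] (1:ℝ))
      (𝓝 ((1 - (D:ℝ)) / 3)) := by
    refine Tendsto.congr' ?_ tendsto_const_nhds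
    filter_upwards [hIoo] with α hα
    rw [kappaAlpha, Wval α hα]
    have h1 : 1 - α ≠ 0 := by have := hα.2; intro h; linarith
    field_simp
    ring
  have hr : ricci G x y = (1 - (D:ℝ)) / 3 := hlim.limUnder_eq
  rw [hr]
  linarith


/-- If the edge `xy` is not contained in any cycle of length
3 or 4, `d_x = d_y = 3`, and `xy` is contained in at most one 5-cycle, then
`κ(x,y) < 0`. -/
theorem ricci_neg_of_deg_three_three_at_most_one_C5
    {V : Type*} (G : SimpleGraph V) [G.LocallyFinite] (hconn : G.Connected)
    {x y : V} (hxy : G.Adj x y)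
    (h3 : ¬ EdgeInCycleOfLength G x y 3)
    (h4 : ¬ EdgeInCycleOfLength G x y 4)
    (hdx : deg G x = 3) (hdy : deg G y = 3)
    (hC5 : ∀ (v w : V) (c₁ : G.Walk v v) (c₂ : G.Walk w w),
      c₁.IsCycle → c₁.length = 5 → s(x, y) ∈ c₁.edges →
      c₂.IsCycle → c₂.length = 5 → s(x, y) ∈ c₂.edges →
      {e : Sym2 V | e ∈ c₁.edges} = {e : Sym2 V | e ∈ c₂.edges}) :
    ricci G x y < 0 := by
  classical
  have hfinx : (G.neighborSet x).Finite := Set.toFinite _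
  have hfiny : (G.neighborSet y).Finite := Set.toFinite _
  have hymem : y ∈ G.neighborSet x := hxy
  have hxmem : x ∈ G.neighborSet y := hxy.symm
  have h2x : ((G.neighborSet x) \ {y}).ncard = 2 := by
    rw [Set.ncard_diff_singleton_of_mem hymem]
    rw [show (G.neighborSet x).ncard = 3 from hdx]
  have h2y : ((G.neighborSet y) \ {x}).ncard = 2 := by
    rw [Set.ncard_diff_singleton_of_mem hxmem]
    rw [show (G.neighborSet y).ncard = 3 from hdy]
  obtain ⟨a, b, hab, habs⟩ := Set.ncard_eq_two.mp h2x
  obtain ⟨c, d, hcd, hcds⟩ := Set.ncard_eq_two.mp h2y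
  have hNx : G.neighborSet x = {y, a, b} := by
    have h1 : insert y (G.neighborSet x \ {y}) = G.neighborSet x :=
      Set.insert_diff_singleton.trans (Set.insert_eq_of_mem hymem)
    rw [← h1, habs]
  have hNy : G.neighborSet y = {x, c, d} := by
    have h1 : insert x (G.neighborSet y \ {x}) = G.neighborSet y :=
      Set.insert_diff_singleton.trans (Set.insert_eq_of_mem hxmem)
    rw [← h1, hcds]
  have hamem : a ∈ G.neighborSet x \ {y} := by rw [habs]; simp
  have hbmem : b ∈ G.neighborSet x \ {y} := by rw [habs]; simp
  have hcmem : c ∈ G.neighborSet y \ {x} := by rw [hcds]; simp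
  have hdmem : d ∈ G.neighborSet y \ {x} := by rw [hcds]; simp
  have hxa : G.Adj x a := hamem.1
  have hxb : G.Adj x b := hbmem.1
  have hyc : G.Adj y c := hcmem.1
  have hyd : G.Adj y d := hdmem.1
  have nay : a ≠ y := by simpa using hamem.2
  have nby : b ≠ y := by simpa using hbmem.2
  have ncx : c ≠ x := by simpa using hcmem.2
  have ndx : d ≠ x := by simpa using hdmem.2
  have nca : ∀ z, G.Adj x z → ¬ G.Adj y z := fun z hxz hyz => h3 (cycle3 hxy hyz hxz.symm)
  have noadj : ∀ u v, G.Adj x u → u ≠ y → G.Adj y v → v ≠ x → ¬ G.Adj u v :=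
    fun u v hxu huy hyv hvx huv =>
      h4 (cycle4 hxy hyv huv.symm hxu.symm (Ne.symm hvx) (Ne.symm huy))
  -- basic distances
  have hay : G.dist a y = 2 :=
    dist_eq_two hconn nay (fun h => nca a hxa h.symm) hxa.symm hxy
  have hby : G.dist b y = 2 :=
    dist_eq_two hconn nby (fun h => nca b hxb h.symm) hxb.symm hxy
  have hxc : G.dist x c = 2 :=
    dist_eq_two hconn (Ne.symm ncx) (fun h => nca c h hyc) hxy hyc
  have hxd : G.dist x d = 2 :=
    dist_eq_two hconn (Ne.symm ndx) (fun h => nca d h hyd) hxy hyd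
  -- pair distances
  have hne : ∀ u v : V, G.Adj x u → u ≠ y → G.Adj y v → v ≠ x → u ≠ v :=
    fun u v hxu _ hyv _ h => nca u hxu (h ▸ hyv)
  have hd3 : ∀ u v : V, G.Adj x u → u ≠ y → G.Adj y v → v ≠ x →
      ¬ (∃ w, G.Adj u w ∧ G.Adj w v) → G.dist u v = 3 := fun u v hxu huy hyv hvx hnw =>
    dist_eq_three hconn (hne u v hxu huy hyv hvx) (noadj u v hxu huy hyv hvx) hnw
      hxu.symm hxy hyv
  have hd2 : ∀ u v : V, G.Adj x u → u ≠ y → G.Adj y v → v ≠ x →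
      (∃ w, G.Adj u w ∧ G.Adj w v) → G.dist u v = 2 := by
    rintro u v hxu huy hyv hvx ⟨w, hw1, hw2⟩
    exact dist_eq_two hconn (hne u v hxu huy hyv hvx) (noadj u v hxu huy hyv hvx) hw1 hw2
  have huniq : ∀ u v u' v' : V, G.Adj x u → u ≠ y → G.Adj y v → v ≠ x →
      G.Adj x u' → u' ≠ y → G.Adj y v' → v' ≠ x →
      (∃ w, G.Adj u w ∧ G.Adj w v) → (∃ w, G.Adj u' w ∧ G.Adj w v') → u = u' ∧ v = v' := by
    rintro u v u' v' hxu huy hyv hvx hxu' hu'y hyv' hv'x ⟨w, hw1, hw2⟩ ⟨w', hw1', hw2'⟩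
    exact pair_unique hC5 hxy nca hxu hyv hxu' hyv' huy hvx hu'y hv'x hw1 hw2 hw1' hw2'
  have hNy' : G.neighborSet y = {x, d, c} := by rw [hNy, Set.pair_comm]
  have hNx' : G.neighborSet x = {y, b, a} := by rw [hNx, Set.pair_comm]
  by_cases Pac : ∃ w, G.Adj a w ∧ G.Adj w c
  · have hnPad : ¬ ∃ w, G.Adj a w ∧ G.Adj w d := fun Pad =>
      hcd (((huniq a c a d hxa nay hyc ncx hxa nay hyd ndx Pac Pad).2))
    have hnPbc : ¬ ∃ w, G.Adj b w ∧ G.Adj w c := fun Pbc =>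
      hab (((huniq a c b c hxa nay hyc ncx hxb nby hyc ncx Pac Pbc).1))
    have hnPbd : ¬ ∃ w, G.Adj b w ∧ G.Adj w d := fun Pbd =>
      hab (((huniq a c b d hxa nay hyc ncx hxb nby hyd ndx Pac Pbd).1))
    have hac : G.dist a c = 2 := hd2 a c hxa nay hyc ncx Pac
    exact main_lemma G hconn hxy hNx hdx hNy hdy hab hcd hay hby hxc hxd
      (hd3 a d hxa nay hyd ndx hnPad) (hd3 b c hxb nby hyc ncx hnPbc)
      (hd3 b d hxb nby hyd ndx hnPbd) (by omega) (by omega)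
  · by_cases Pad : ∃ w, G.Adj a w ∧ G.Adj w d
    · have hnPbd : ¬ ∃ w, G.Adj b w ∧ G.Adj w d := fun Pbd =>
        hab (((huniq a d b d hxa nay hyd ndx hxb nby hyd ndx Pad Pbd).1))
      have hnPbc : ¬ ∃ w, G.Adj b w ∧ G.Adj w c := fun Pbc =>
        hcd (((huniq a d b c hxa nay hyd ndx hxb nby hyc ncx Pad Pbc).2)).symm
      have had : G.dist a d = 2 := hd2 a d hxa nay hyd ndx Pad
      exact main_lemma G hconn hxy hNx hdx hNy' hdy hab (Ne.symm hcd) hay hby hxd hxc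
        (hd3 a c hxa nay hyc ncx Pac) (hd3 b d hxb nby hyd ndx hnPbd)
        (hd3 b c hxb nby hyc ncx hnPbc) (by omega) (by omega)
    · by_cases Pbc : ∃ w, G.Adj b w ∧ G.Adj w c
      · have hnPbd : ¬ ∃ w, G.Adj b w ∧ G.Adj w d := fun Pbd =>
          hcd (((huniq b c b d hxb nby hyc ncx hxb nby hyd ndx Pbc Pbd).2))
        have hbc : G.dist b c = 2 := hd2 b c hxb nby hyc ncx Pbc
        exact main_lemma G hconn hxy hNx' hdx hNy hdy (Ne.symm hab) hcd hby hay hxc hxd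
          (hd3 b d hxb nby hyd ndx hnPbd) (hd3 a c hxa nay hyc ncx Pac)
          (hd3 a d hxa nay hyd ndx Pad) (by omega) (by omega)
      · by_cases Pbd : ∃ w, G.Adj b w ∧ G.Adj w d
        · have hbd : G.dist b d = 2 := hd2 b d hxb nby hyd ndx Pbd
          exact main_lemma G hconn hxy hNx' hdx hNy' hdy (Ne.symm hab) (Ne.symm hcd)
            hby hay hxd hxc (hd3 b c hxb nby hyc ncx Pbc) (hd3 a d hxa nay hyd ndx Pad)
            (hd3 a c hxa nay hyc ncx Pac) (by omega) (by omega)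
        · have hac : G.dist a c = 3 := hd3 a c hxa nay hyc ncx Pac
          exact main_lemma G hconn hxy hNx hdx hNy hdy hab hcd hay hby hxc hxd
            (hd3 a d hxa nay hyd ndx Pad) (hd3 b c hxb nby hyc ncx Pbc)
            (hd3 b d hxb nby hyd ndx Pbd) (by omega) (by omega)


end RicciFlatPaper

end
end

section
/- Let G be a connected, locally finite simple Ricci-flat graph with girth g(G) ≥ 5 and at least two vertices. Then every vertex of G has degree 2, 3, or 4. -/
open Filter Topology Classical

noncomputable section

namespace RicciFlatPaper

variable {V : Type*}

section Basic

variable (G : SimpleGraph V) [G.LocallyFinite] (x y : V) (α : ℝ)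

lemma deg_eq_card : deg G x = (G.neighborFinset x).card := by
  rw [deg, G.neighborFinset_def, Set.ncard_eq_toFinset_card']

lemma mass_nonneg (h0 : 0 ≤ α) (h1 : α ≤ 1) (v : V) : 0 ≤ mass G α x v := by
  unfold mass
  split_ifs with h h'
  · linarith
  · exact div_nonneg (by linarith) (Nat.cast_nonneg _)
  · exact le_refl 0

lemma mass_support : Function.support (mass G α x) ⊆ ↑(insert x (G.neighborFinset x)) := by
  intro v hv
  simp only [Function.mem_support, mass] at hv
  by_contra hmem
  simp only [Finset.coe_insert, Set.mem_insert_iff, Finset.mem_coe,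
    SimpleGraph.mem_neighborFinset] at hmem
  push_neg at hmem
  rw [if_neg hmem.1, if_neg hmem.2] at hv
  exact hv rfl

lemma finsum_mul_mass (f : V → ℝ) :
    ∑ᶠ v, f v * mass G α x v
      = α * f x + ((1 - α) / (deg G x)) * ∑ u ∈ G.neighborFinset x, f u := by
  have hsub : Function.support (fun v => f v * mass G α x v)
      ⊆ ↑(insert x (G.neighborFinset x)) := by
    intro v hv
    apply mass_support G x α
    simp only [Function.mem_support] at hv ⊢
    intro h; apply hv; rw [h, mul_zero]
  rw [finsum_eq_sum_of_support_subset _ hsub,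
    Finset.sum_insert (G.notMem_neighborFinset_self x)]
  have hx : mass G α x x = α := by simp [mass]
  rw [hx]
  have : ∀ u ∈ G.neighborFinset x, f u * mass G α x u = ((1 - α) / (deg G x)) * f u := by
    intro u hu
    rw [SimpleGraph.mem_neighborFinset] at hu
    have hne : u ≠ x := fun h => G.irrefl (h ▸ hu)
    rw [mass, if_neg hne, if_pos hu]; ring
  rw [Finset.sum_congr rfl this, ← Finset.mul_sum]; ring

lemma mass_total (hx : 0 < deg G x) : ∑ᶠ v, mass G α x v = 1 := by
  have h := finsum_mul_mass G x α (fun _ => 1)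
  simp only [one_mul, mul_one] at h
  rw [h, Finset.sum_const, ← deg_eq_card, nsmul_eq_mul, mul_one]
  have : (deg G x : ℝ) ≠ 0 := Nat.cast_ne_zero.2 hx.ne'
  field_simp
  ring

end Basic

section Coupling

variable {G : SimpleGraph V} {m₁ m₂ : V → ℝ} {A : V → V → ℝ}

lemma cost_nonneg (h : ∀ u v, 0 ≤ A u v) :
    0 ≤ ∑ᶠ p : V × V, A p.1 p.2 * (G.dist p.1 p.2 : ℝ) :=
  finsum_nonneg fun p => mul_nonneg (h p.1 p.2) (Nat.cast_nonneg _)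

lemma W_bddBelow : BddBelow {c | ∃ A : V → V → ℝ, IsCoupling m₁ m₂ A ∧
    c = ∑ᶠ p : V × V, A p.1 p.2 * (G.dist p.1 p.2 : ℝ)} := by
  refine ⟨0, ?_⟩
  rintro c ⟨A, hA, rfl⟩
  exact cost_nonneg hA.1

lemma W_le (hA : IsCoupling m₁ m₂ A) :
    W G m₁ m₂ ≤ ∑ᶠ p : V × V, A p.1 p.2 * (G.dist p.1 p.2 : ℝ) :=
  csInf_le W_bddBelow ⟨A, hA, rfl⟩

lemma dual_le_cost (hA : IsCoupling m₁ m₂ A) (f : V → ℝ)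
    (hf : ∀ u v, m₁ u ≠ 0 → m₂ v ≠ 0 → f u - f v ≤ (G.dist u v : ℝ)) :
    (∑ᶠ u, f u * m₁ u) - (∑ᶠ v, f v * m₂ v)
      ≤ ∑ᶠ p : V × V, A p.1 p.2 * (G.dist p.1 p.2 : ℝ) := by
  obtain ⟨hpos, hfin, hrow, hcol⟩ := hA
  classical
  set P : Finset (V × V) := hfin.toFinset with hP
  set T : Finset V := P.image Prod.fst ∪ P.image Prod.snd with hT
  have hmemP : ∀ u v, A u v ≠ 0 → (u, v) ∈ P := by
    intro u v h; rw [hP, Set.Finite.mem_toFinset]; exact h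
  have hTfst : ∀ u v, A u v ≠ 0 → u ∈ T := by
    intro u v h
    exact Finset.mem_union_left _ (Finset.mem_image.2 ⟨(u,v), hmemP u v h, rfl⟩)
  have hTsnd : ∀ u v, A u v ≠ 0 → v ∈ T := by
    intro u v h
    exact Finset.mem_union_right _ (Finset.mem_image.2 ⟨(u,v), hmemP u v h, rfl⟩)
  have hrowT : ∀ u, m₁ u = ∑ v ∈ T, A u v := by
    intro u
    rw [← hrow u]
    exact finsum_eq_sum_of_support_subset _ (fun v hv => hTsnd u v hv)
  have hcolT : ∀ v, m₂ v = ∑ u ∈ T, A u v := by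
    intro v
    rw [← hcol v]
    exact finsum_eq_sum_of_support_subset _ (fun u hu => hTfst u v hu)
  have h1 : ∑ᶠ u, f u * m₁ u = ∑ u ∈ T, f u * m₁ u := by
    apply finsum_eq_sum_of_support_subset
    intro u hu
    have hm : m₁ u ≠ 0 := by
      intro h; apply hu; simp only [Function.mem_support] at *; rw [h, mul_zero]
    rw [hrowT u] at hm
    obtain ⟨v, -, hv⟩ := Finset.exists_ne_zero_of_sum_ne_zero hm
    exact hTfst u v hv
  have h2 : ∑ᶠ v, f v * m₂ v = ∑ v ∈ T, f v * m₂ v := by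
    apply finsum_eq_sum_of_support_subset
    intro v hv
    have hm : m₂ v ≠ 0 := by
      intro h; apply hv; simp only [Function.mem_support] at *; rw [h, mul_zero]
    rw [hcolT v] at hm
    obtain ⟨u, -, hu⟩ := Finset.exists_ne_zero_of_sum_ne_zero hm
    exact hTsnd u v hu
  have hcost : ∑ᶠ p : V × V, A p.1 p.2 * (G.dist p.1 p.2 : ℝ)
      = ∑ u ∈ T, ∑ v ∈ T, A u v * (G.dist u v : ℝ) := by
    rw [← Finset.sum_product']
    apply finsum_eq_sum_of_support_subset
    rintro ⟨u, v⟩ hp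
    have : A u v ≠ 0 := by
      intro h
      simp only [Function.mem_support] at hp
      exact hp (by rw [h, zero_mul])
    exact Finset.mem_product.2 ⟨hTfst u v this, hTsnd u v this⟩
  rw [h1, h2, hcost]
  have hL : ∑ u ∈ T, f u * m₁ u - ∑ v ∈ T, f v * m₂ v
      = ∑ u ∈ T, ∑ v ∈ T, (f u - f v) * A u v := by
    simp only [sub_mul, Finset.sum_sub_distrib]
    congr 1
    · apply Finset.sum_congr rfl
      intro u _
      rw [hrowT u, Finset.mul_sum]
    · rw [Finset.sum_comm]
      apply Finset.sum_congr rfl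
      intro v _
      rw [hcolT v, Finset.mul_sum]
  rw [hL]
  apply Finset.sum_le_sum
  intro u hu
  apply Finset.sum_le_sum
  intro v hv
  rcases eq_or_ne (A u v) 0 with h | h
  · simp [h]
  · have hApos : 0 < A u v := lt_of_le_of_ne (hpos u v) (Ne.symm h)
    have hm1 : m₁ u ≠ 0 := by
      rw [hrowT u]
      have : A u v ≤ ∑ v' ∈ T, A u v' :=
        Finset.single_le_sum (fun i _ => hpos u i) hv
      exact (lt_of_lt_of_le hApos this).ne'
    have hm2 : m₂ v ≠ 0 := by
      rw [hcolT v]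
      have : A u v ≤ ∑ u' ∈ T, A u' v :=
        Finset.single_le_sum (fun i _ => hpos i v) hu
      exact (lt_of_lt_of_le hApos this).ne'
    calc (f u - f v) * A u v ≤ (G.dist u v : ℝ) * A u v :=
          mul_le_mul_of_nonneg_right (hf u v hm1 hm2) (hpos u v)
      _ = A u v * (G.dist u v : ℝ) := mul_comm _ _

lemma le_W (hne : ∃ A : V → V → ℝ, IsCoupling m₁ m₂ A) (f : V → ℝ)
    (hf : ∀ u v, m₁ u ≠ 0 → m₂ v ≠ 0 → f u - f v ≤ (G.dist u v : ℝ)) :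
    (∑ᶠ u, f u * m₁ u) - (∑ᶠ v, f v * m₂ v) ≤ W G m₁ m₂ := by
  obtain ⟨A₀, hA₀⟩ := hne
  refine le_csInf ⟨_, ⟨A₀, hA₀, rfl⟩⟩ ?_
  rintro c ⟨A, hA, rfl⟩
  exact dual_le_cost hA f hf

lemma isCoupling_prod (h1 : ∑ᶠ u, m₁ u = 1) (h2 : ∑ᶠ v, m₂ v = 1)
    (hs1 : (Function.support m₁).Finite) (hs2 : (Function.support m₂).Finite)
    (hn1 : ∀ u, 0 ≤ m₁ u) (hn2 : ∀ v, 0 ≤ m₂ v) :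
    IsCoupling m₁ m₂ (fun u v => m₁ u * m₂ v) := by
  refine ⟨fun u v => mul_nonneg (hn1 u) (hn2 v), ?_, fun u => ?_, fun v => ?_⟩
  · apply (hs1.prod hs2).subset
    rintro ⟨u, v⟩ hp
    simp only [Function.mem_support] at hp
    simp only [Set.mem_prod, Function.mem_support]
    exact ⟨fun h => hp (by rw [h, zero_mul]), fun h => hp (by rw [h, mul_zero])⟩
  · rw [← mul_finsum' _ _ hs2, h2, mul_one]
  · rw [← finsum_mul' _ _ hs1, h1, one_mul]

end Coupling

section MassCoupling

variable (G : SimpleGraph V) [G.LocallyFinite]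

lemma mass_support_finite (x : V) (α : ℝ) : (Function.support (mass G α x)).Finite :=
  ((insert x (G.neighborFinset x)).finite_toSet).subset (mass_support G x α)

lemma exists_coupling_mass {x y : V} (hx : 0 < deg G x) (hy : 0 < deg G y) {α : ℝ}
    (h0 : 0 ≤ α) (h1 : α ≤ 1) :
    ∃ A : V → V → ℝ, IsCoupling (mass G α x) (mass G α y) A :=
  ⟨_, isCoupling_prod (mass_total G x α hx) (mass_total G y α hy)
    (mass_support_finite G x α) (mass_support_finite G y α)
    (mass_nonneg G x α h0 h1) (mass_nonneg G y α h0 h1)⟩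

lemma mass_affine (x : V) {p q : ℝ} (α β : ℝ) (hpq : p + q = 1) :
    mass G (p * α + q * β) x = fun v => p * mass G α x v + q * mass G β x v := by
  funext v
  unfold mass
  split_ifs with h h'
  · ring
  · have hnum : 1 - (p * α + q * β) = p * (1 - α) + q * (1 - β) := by
      linear_combination (-1 : ℝ) * hpq
    rw [hnum, add_div, mul_div_assoc, mul_div_assoc]
  · ring

lemma row_support_finite {A : V → V → ℝ}
    (hfin : (Function.support (fun p : V × V => A p.1 p.2)).Finite) (u : V) :
    (Function.support (A u)).Finite :=
  (hfin.image Prod.snd).subset (fun v hv => ⟨(u, v), hv, rfl⟩)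

lemma col_support_finite {A : V → V → ℝ}
    (hfin : (Function.support (fun p : V × V => A p.1 p.2)).Finite) (v : V) :
    (Function.support (fun u => A u v)).Finite :=
  (hfin.image Prod.fst).subset (fun u hu => ⟨(u, v), hu, rfl⟩)

lemma le_sInf_combo {S₁ S₂ : Set ℝ} (h1 : S₁.Nonempty) (h2 : S₂.Nonempty)
    {p q r : ℝ} (hp : 0 ≤ p) (hq : 0 ≤ q)
    (H : ∀ c₁ ∈ S₁, ∀ c₂ ∈ S₂, r ≤ p * c₁ + q * c₂) :
    r ≤ p * sInf S₁ + q * sInf S₂ := by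
  refine le_of_forall_pos_le_add fun ε hε => ?_
  have hpq1 : (0:ℝ) < p + q + 1 := by linarith
  have hε' : 0 < ε / (p + q + 1) := by positivity
  obtain ⟨c₁, hc₁, hlt₁⟩ := Real.lt_sInf_add_pos h1 hε'
  obtain ⟨c₂, hc₂, hlt₂⟩ := Real.lt_sInf_add_pos h2 hε'
  have := H c₁ hc₁ c₂ hc₂
  have h₁ : p * c₁ ≤ p * (sInf S₁ + ε / (p + q + 1)) :=
    mul_le_mul_of_nonneg_left hlt₁.le hp
  have h₂ : q * c₂ ≤ q * (sInf S₂ + ε / (p + q + 1)) :=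
    mul_le_mul_of_nonneg_left hlt₂.le hq
  have key : (p + q) * (ε / (p + q + 1)) ≤ ε := by
    rw [mul_comm, div_mul_eq_mul_div, div_le_iff₀ hpq1]
    nlinarith
  nlinarith [this, h₁, h₂]

lemma W_mass_convex {x y : V} (hx : 0 < deg G x) (hy : 0 < deg G y) :
    ConvexOn ℝ (Set.Icc (0:ℝ) 1) (fun α => W G (mass G α x) (mass G α y)) := by
  refine ⟨convex_Icc 0 1, ?_⟩
  rintro α ⟨hα0, hα1⟩ β ⟨hβ0, hβ1⟩ p q hp hq hpq
  simp only [smul_eq_mul]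
  unfold W
  apply le_sInf_combo
  · obtain ⟨A, hA⟩ := exists_coupling_mass G hx hy hα0 hα1
    exact ⟨_, A, hA, rfl⟩
  · obtain ⟨A, hA⟩ := exists_coupling_mass G hx hy hβ0 hβ1
    exact ⟨_, A, hA, rfl⟩
  · exact hp
  · exact hq
  rintro c₁ ⟨A₁, hA₁, rfl⟩ c₂ ⟨A₂, hA₂, rfl⟩
  set A : V → V → ℝ := fun u v => p * A₁ u v + q * A₂ u v with hAdef
  have hfin : (Function.support (fun pr : V × V => A pr.1 pr.2)).Finite := by
    apply (hA₁.2.1.union hA₂.2.1).subset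
    rintro ⟨u, v⟩ hp'
    simp only [Function.mem_support, hAdef] at hp'
    by_contra hc
    simp only [Set.mem_union, Function.mem_support, not_or, not_not] at hc
    rw [hc.1, hc.2, mul_zero, mul_zero, add_zero] at hp'
    exact hp' rfl
  have hcoup : IsCoupling (mass G (p * α + q * β) x) (mass G (p * α + q * β) y) A := by
    refine ⟨fun u v => add_nonneg (mul_nonneg hp (hA₁.1 u v)) (mul_nonneg hq (hA₂.1 u v)),
      hfin, fun u => ?_, fun v => ?_⟩
    · rw [mass_affine G x α β hpq]
      have e1 : (Function.support (fun v => p * A₁ u v)).Finite :=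
        (row_support_finite hA₁.2.1 u).subset (Function.support_mul_subset_right _ _)
      have e2 : (Function.support (fun v => q * A₂ u v)).Finite :=
        (row_support_finite hA₂.2.1 u).subset (Function.support_mul_subset_right _ _)
      show ∑ᶠ v, (p * A₁ u v + q * A₂ u v) = p * mass G α x u + q * mass G β x u
      rw [finsum_add_distrib e1 e2, ← mul_finsum' _ _ (row_support_finite hA₁.2.1 u),
        ← mul_finsum' _ _ (row_support_finite hA₂.2.1 u), hA₁.2.2.1 u, hA₂.2.2.1 u]
    · rw [mass_affine G y α β hpq]
      have e1 : (Function.support (fun u => p * A₁ u v)).Finite :=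
        (col_support_finite hA₁.2.1 v).subset (Function.support_mul_subset_right _ _)
      have e2 : (Function.support (fun u => q * A₂ u v)).Finite :=
        (col_support_finite hA₂.2.1 v).subset (Function.support_mul_subset_right _ _)
      show ∑ᶠ u, (p * A₁ u v + q * A₂ u v) = p * mass G α y v + q * mass G β y v
      rw [finsum_add_distrib e1 e2, ← mul_finsum' _ _ (col_support_finite hA₁.2.1 v),
        ← mul_finsum' _ _ (col_support_finite hA₂.2.1 v), hA₁.2.2.2 v, hA₂.2.2.2 v]
  refine le_trans (W_le hcoup) (le_of_eq ?_)
  have c1fin : (Function.support (fun pr : V × V => A₁ pr.1 pr.2 * (G.dist pr.1 pr.2 : ℝ))).Finite :=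
    hA₁.2.1.subset (fun pr hpr => by
      simp only [Function.mem_support] at hpr ⊢
      exact fun h => hpr (by rw [h, zero_mul]))
  have c2fin : (Function.support (fun pr : V × V => A₂ pr.1 pr.2 * (G.dist pr.1 pr.2 : ℝ))).Finite :=
    hA₂.2.1.subset (fun pr hpr => by
      simp only [Function.mem_support] at hpr ⊢
      exact fun h => hpr (by rw [h, zero_mul]))
  have e1 : (Function.support (fun pr : V × V =>
      p * (A₁ pr.1 pr.2 * (G.dist pr.1 pr.2 : ℝ)))).Finite :=
    c1fin.subset (Function.support_mul_subset_right _ _)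
  have e2 : (Function.support (fun pr : V × V =>
      q * (A₂ pr.1 pr.2 * (G.dist pr.1 pr.2 : ℝ)))).Finite :=
    c2fin.subset (Function.support_mul_subset_right _ _)
  have hfun : (fun pr : V × V => A pr.1 pr.2 * (G.dist pr.1 pr.2 : ℝ))
      = fun pr : V × V => p * (A₁ pr.1 pr.2 * (G.dist pr.1 pr.2 : ℝ))
        + q * (A₂ pr.1 pr.2 * (G.dist pr.1 pr.2 : ℝ)) := by
    funext pr; show (p * A₁ pr.1 pr.2 + q * A₂ pr.1 pr.2) * _ = _; ring
  rw [hfun, finsum_add_distrib e1 e2, ← mul_finsum' _ _ c1fin, ← mul_finsum' _ _ c2fin]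

end MassCoupling

section Boundary

variable (G : SimpleGraph V) [G.LocallyFinite] {x y : V}

lemma deg_pos_of_adj (hxy : G.Adj x y) : 0 < deg G x := by
  rw [deg_eq_card]
  exact Finset.card_pos.2 ⟨y, by simpa using hxy⟩

lemma dist_cast_adj (hxy : G.Adj x y) : (G.dist x y : ℝ) = 1 := by
  rw [SimpleGraph.dist_eq_one_iff_adj.mpr hxy]; norm_num

lemma two_le_dist (hconn : G.Connected) (hne : x ≠ y) (hnadj : ¬ G.Adj x y) :
    (2 : ℝ) ≤ (G.dist x y : ℝ) := by
  have h0 : 0 < G.dist x y := hconn.pos_dist_of_ne hne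
  have h1 : G.dist x y ≠ 1 := fun h => hnadj (SimpleGraph.dist_eq_one_iff_adj.mp h)
  have : 2 ≤ G.dist x y := by omega
  exact_mod_cast this

lemma neg_dist_lipschitz (hconn : G.Connected) (x u v : V) :
    -(G.dist x u : ℝ) - -(G.dist x v : ℝ) ≤ (G.dist u v : ℝ) := by
  have h := hconn.dist_triangle (u := x) (v := u) (w := v)
  have h' : (G.dist x v : ℝ) ≤ (G.dist x u : ℝ) + (G.dist u v : ℝ) := by exact_mod_cast h
  linarith

lemma mass_one_eq_zero (u : V) (hu : u ≠ x) : mass G 1 x u = 0 := by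
  simp [mass, hu]

lemma mass_one_self : mass G 1 x x = 1 := by simp [mass]

lemma sum_neg_dist_self :
    ∑ u ∈ G.neighborFinset x, -(G.dist x u : ℝ) = -(deg G x : ℝ) := by
  have : ∀ u ∈ G.neighborFinset x, -(G.dist x u : ℝ) = -1 := by
    intro u hu
    rw [dist_cast_adj G (by simpa using hu : G.Adj x u)]
  rw [Finset.sum_congr rfl this, Finset.sum_const, deg_eq_card]
  simp

lemma W_mass_one (hconn : G.Connected) (hxy : G.Adj x y) :
    W G (mass G 1 x) (mass G 1 y) = 1 := by
  have hx := deg_pos_of_adj G hxy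
  have hy := deg_pos_of_adj G hxy.symm
  apply le_antisymm
  · have hc := isCoupling_prod (mass_total G x 1 hx) (mass_total G y 1 hy)
      (mass_support_finite G x 1) (mass_support_finite G y 1)
      (mass_nonneg G x 1 zero_le_one le_rfl) (mass_nonneg G y 1 zero_le_one le_rfl)
    refine le_trans (W_le hc) (le_of_eq ?_)
    have hz : ∀ p : V × V, p ≠ (x, y) →
        mass G 1 x p.1 * mass G 1 y p.2 * (G.dist p.1 p.2 : ℝ) = 0 := by
      intro p hp
      rcases eq_or_ne p.1 x with h1 | h1
      · have h2 : p.2 ≠ y := fun h2 => hp (Prod.ext h1 h2)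
        rw [mass_one_eq_zero G p.2 h2, mul_zero, zero_mul]
      · rw [mass_one_eq_zero G p.1 h1, zero_mul, zero_mul]
    rw [finsum_eq_single _ (x, y) hz]
    show mass G 1 x x * mass G 1 y y * (G.dist x y : ℝ) = 1
    rw [mass_one_self, mass_one_self, one_mul, one_mul, dist_cast_adj G hxy]
  · have hval := le_W (exists_coupling_mass G hx hy zero_le_one le_rfl)
      (fun v => -(G.dist x v : ℝ))
      (fun u v _ _ => neg_dist_lipschitz G hconn x u v)
    rw [finsum_mul_mass, finsum_mul_mass] at hval
    have hxx : (G.dist x x : ℝ) = 0 := by rw [SimpleGraph.dist_self]; norm_num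
    rw [hxx, dist_cast_adj G hxy] at hval
    norm_num at hval
    linarith

lemma W_mass_ge_two_alpha (hconn : G.Connected) (hxy : G.Adj x y) {α : ℝ}
    (h0 : 0 ≤ α) (h1 : α ≤ 1) :
    2 * α - 1 ≤ W G (mass G α x) (mass G α y) := by
  have hx := deg_pos_of_adj G hxy
  have hy := deg_pos_of_adj G hxy.symm
  have hval := le_W (exists_coupling_mass G hx hy h0 h1)
    (fun v => -(G.dist x v : ℝ))
    (fun u v _ _ => neg_dist_lipschitz G hconn x u v)
  rw [finsum_mul_mass, finsum_mul_mass] at hval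
  rw [sum_neg_dist_self] at hval
  refine le_trans ?_ hval
  rw [SimpleGraph.dist_self]
  have hd : (deg G x : ℝ) ≠ 0 := Nat.cast_ne_zero.2 hx.ne'
  have hsum : ∑ w ∈ G.neighborFinset y, -(G.dist x w : ℝ) ≤ 0 :=
    Finset.sum_nonpos (fun w _ => neg_nonpos.2 (Nat.cast_nonneg _))
  have hxy1 : -(G.dist x y : ℝ) = -1 := by rw [dist_cast_adj G hxy]
  rw [hxy1]
  have hb : 0 ≤ (1 - α) / (deg G y : ℝ) := div_nonneg (by linarith) (Nat.cast_nonneg _)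
  have e1 : (1 - α) / (deg G x : ℝ) * -(deg G x : ℝ) = -(1 - α) := by
    field_simp
  have key : (1 - α) / (deg G y : ℝ) * ∑ w ∈ G.neighborFinset y, -(G.dist x w : ℝ) ≤ 0 :=
    mul_nonpos_of_nonneg_of_nonpos hb hsum
  nlinarith

end Boundary

section Limit

variable (G : SimpleGraph V) [G.LocallyFinite] {x y : V}

lemma kappa_tendsto (hconn : G.Connected) (hxy : G.Adj x y) :
    Filter.Tendsto (fun α => kappaAlpha G α x y / (1 - α)) (𝓝[<] (1 : ℝ))
      (𝓝 (ricci G x y)) := by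
  have hx := deg_pos_of_adj G hxy
  have hy := deg_pos_of_adj G hxy.symm
  set h : ℝ → ℝ := fun α => W G (mass G α x) (mass G α y) with hh
  set g : ℝ → ℝ := fun α => kappaAlpha G α x y / (1 - α) with hg
  have h1 : h 1 = 1 := W_mass_one G hconn hxy
  have hslope : ∀ α ∈ Set.Ioo (0:ℝ) 1, g α = slope h 1 α := by
    intro α hα
    have hne : α - 1 ≠ 0 := by
      have := hα.2; intro hc; apply absurd this; rw [show α = 1 by linarith]; simp
    rw [hg, slope_def_field, h1]
    show (1 - h α) / (1 - α) = (h α - 1) / (α - 1)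
    rw [div_eq_div_iff (by intro hc; apply hne; linarith) hne]
    ring
  have hmono : MonotoneOn g (Set.Ioo (0:ℝ) 1) := by
    intro a ha b hb hab
    rw [hslope a ha, hslope b hb]
    have hcx := W_mass_convex G hx hy
    have h1mem : (1:ℝ) ∈ Set.Icc (0:ℝ) 1 := by norm_num
    refine (hcx.slope_mono h1mem) ?_ ?_ hab
    · exact ⟨⟨ha.1.le, ha.2.le⟩, fun hc => absurd (Set.mem_singleton_iff.1 hc) ha.2.ne⟩
    · exact ⟨⟨hb.1.le, hb.2.le⟩, fun hc => absurd (Set.mem_singleton_iff.1 hc) hb.2.ne⟩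
  have hbdd : BddAbove (g '' Set.Ioo (0:ℝ) 1) := by
    refine ⟨2, ?_⟩
    rintro r ⟨α, hα, rfl⟩
    have hW := W_mass_ge_two_alpha G hconn hxy hα.1.le hα.2.le
    have hpos : 0 < 1 - α := by linarith [hα.2]
    rw [hg]
    show kappaAlpha G α x y / (1 - α) ≤ 2
    rw [div_le_iff₀ hpos]
    show 1 - h α ≤ 2 * (1 - α)
    linarith
  have ht := MonotoneOn.tendsto_nhdsWithin_Ioo_left
    (⟨1/2, by norm_num⟩ : (Set.Ioo (0:ℝ) 1).Nonempty) hmono hbdd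
  have hlim : ricci G x y = sSup (g '' Set.Ioo (0:ℝ) 1) := ht.limUnder_eq
  rw [hlim]
  exact ht

end Limit

section Girth

variable {G : SimpleGraph V}

lemma egirth_le_of_cycle {a : V} {c : G.Walk a a} (hc : c.IsCycle) :
    G.egirth ≤ c.length := by
  rw [SimpleGraph.egirth]
  exact iInf_le_of_le a (iInf_le_of_le c (iInf_le_of_le hc le_rfl))

lemma girth_le_of_cycle {a : V} {c : G.Walk a a} (hc : c.IsCycle) {n : ℕ}
    (hn : c.length = n) : G.girth ≤ n := by
  have h := egirth_le_of_cycle hc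
  rw [hn] at h
  have := ENat.toNat_le_toNat h (by simp)
  simpa [SimpleGraph.girth] using this

lemma no_triangle (hgirth : 5 ≤ G.girth) {a b c : V}
    (hab : G.Adj a b) (hbc : G.Adj b c) (hca : G.Adj c a) : False := by
  have n1 : b ≠ c := hbc.ne
  have n1' : c ≠ b := hbc.ne'
  have n2 : b ≠ a := hab.ne'
  have n2' : a ≠ b := hab.ne
  have n3 : c ≠ a := hca.ne
  have n3' : a ≠ c := hca.ne'
  set p : G.Walk b a := SimpleGraph.Walk.cons hbc (SimpleGraph.Walk.cons hca SimpleGraph.Walk.nil)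
  have hpath : p.IsPath := by
    simp [p, SimpleGraph.Walk.isPath_def, n1, n1', n2, n2', n3, n3']
  have hcyc : (SimpleGraph.Walk.cons hab p).IsCycle := by
    rw [SimpleGraph.Walk.cons_isCycle_iff]
    refine ⟨hpath, ?_⟩
    simp only [p, SimpleGraph.Walk.edges_cons, SimpleGraph.Walk.edges_nil, List.mem_cons,
      List.not_mem_nil, or_false]
    push_neg
    constructor
    · intro h; rw [Sym2.eq_iff] at h
      rcases h with ⟨h1, -⟩ | ⟨h1, -⟩
      · exact n2' h1
      · exact n3' h1
    · intro h; rw [Sym2.eq_iff] at h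
      rcases h with ⟨h1, -⟩ | ⟨-, h2⟩
      · exact n3' h1
      · exact n1 h2
  have h3 : (SimpleGraph.Walk.cons hab p).length = 3 := by simp [p]
  have := girth_le_of_cycle hcyc h3
  omega

lemma no_square (hgirth : 5 ≤ G.girth) {a b c d : V}
    (hab : G.Adj a b) (hbc : G.Adj b c) (hcd : G.Adj c d) (hda : G.Adj d a)
    (hac : a ≠ c) (hbd : b ≠ d) : False := by
  have n1 : b ≠ c := hbc.ne
  have n1' : c ≠ b := hbc.ne'
  have n2 : b ≠ d := hbd
  have n2' : d ≠ b := hbd.symm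
  have n3 : b ≠ a := hab.ne'
  have n3' : a ≠ b := hab.ne
  have n4 : c ≠ d := hcd.ne
  have n4' : d ≠ c := hcd.ne'
  have n5 : c ≠ a := hac.symm
  have n5' : a ≠ c := hac
  have n6 : d ≠ a := hda.ne
  have n6' : a ≠ d := hda.ne'
  set p : G.Walk b a := SimpleGraph.Walk.cons hbc
    (SimpleGraph.Walk.cons hcd (SimpleGraph.Walk.cons hda SimpleGraph.Walk.nil))
  have hpath : p.IsPath := by
    simp [p, SimpleGraph.Walk.isPath_def, n1, n1', n2, n2', n3, n3', n4, n4', n5, n5', n6, n6']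
  have hcyc : (SimpleGraph.Walk.cons hab p).IsCycle := by
    rw [SimpleGraph.Walk.cons_isCycle_iff]
    refine ⟨hpath, ?_⟩
    simp only [p, SimpleGraph.Walk.edges_cons, SimpleGraph.Walk.edges_nil, List.mem_cons,
      List.not_mem_nil, or_false]
    push_neg
    refine ⟨?_, ?_, ?_⟩
    · intro h; rw [Sym2.eq_iff] at h
      rcases h with ⟨h1, -⟩ | ⟨h1, -⟩
      · exact n3' h1
      · exact n5' h1
    · intro h; rw [Sym2.eq_iff] at h
      rcases h with ⟨h1, -⟩ | ⟨-, h2⟩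
      · exact n5' h1
      · exact n1 h2
    · intro h; rw [Sym2.eq_iff] at h
      rcases h with ⟨-, h2⟩ | ⟨-, h2⟩
      · exact n3' h2.symm
      · exact n2 h2
  have h4 : (SimpleGraph.Walk.cons hab p).length = 4 := by simp [p]
  have := girth_le_of_cycle hcyc h4
  omega

end Girth

section Bounds

variable (G : SimpleGraph V) [G.LocallyFinite] {x y : V}

lemma mass_cases {α : ℝ} {x u : V} (h : mass G α x u ≠ 0) : u = x ∨ G.Adj x u := by
  by_contra hc
  push_neg at hc
  simp [mass, hc.1, hc.2] at h

lemma one_le_dist (hconn : G.Connected) {u v : V} (h : u ≠ v) : (1 : ℝ) ≤ (G.dist u v : ℝ) := by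
  have := hconn.pos_dist_of_ne h
  exact_mod_cast this

/-- Dual (Lipschitz) upper bound on `κ_α` for an edge in a graph of girth at least five. -/
lemma kappa_upper (hconn : G.Connected) (hgirth : 5 ≤ G.girth) (hxy : G.Adj x y)
    {α : ℝ} (h0 : 0 ≤ α) (h1 : α < 1) :
    kappaAlpha G α x y / (1 - α) ≤ 2 / (deg G x : ℝ) + 1 / (deg G y : ℝ) - 1 := by
  have hx := deg_pos_of_adj G hxy
  have hy := deg_pos_of_adj G hxy.symm
  set f : V → ℝ := fun v => if v = x then 1 else if v = y then 0 else if G.Adj x v then 2 else 0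
    with hfdef
  have hfx : f x = 1 := by simp [hfdef]
  have hfy : f y = 0 := by simp [hfdef, hxy.ne']
  have hf_nonneg : ∀ v, 0 ≤ f v := by
    intro v; rw [hfdef]; dsimp only; split_ifs <;> norm_num
  have hf_le_two : ∀ v, f v ≤ 2 := by
    intro v; rw [hfdef]; dsimp only; split_ifs <;> norm_num
  have hf : ∀ u v, mass G α x u ≠ 0 → mass G α y v ≠ 0 →
      f u - f v ≤ (G.dist u v : ℝ) := by
    intro u v hu hv
    rcases mass_cases G hu with rfl | hu
    · -- u = x
      rw [hfx]
      rcases mass_cases G hv with rfl | hv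
      · rw [hfy, dist_cast_adj G hxy]; norm_num
      · rcases eq_or_ne v u with rfl | hne
        · simp [SimpleGraph.dist_self]; linarith [hf_nonneg v]
        · have h1d := one_le_dist G hconn (Ne.symm hne)
          linarith [hf_nonneg v]
    · -- Adj x u
      rcases eq_or_ne u y with rfl | huy
      · rw [hfy]; have := hf_nonneg v
        have hd : (0:ℝ) ≤ (G.dist u v : ℝ) := Nat.cast_nonneg _
        linarith
      · have hfu : f u = 2 := by
          have hux : u ≠ x := hu.ne'
          simp [hfdef, hux, huy, hu]
        rw [hfu]
        rcases mass_cases G hv with rfl | hv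
        · -- v = y
          have hnadj : ¬ G.Adj u v := fun h => no_triangle hgirth hu h hxy.symm
          have := two_le_dist G hconn huy hnadj
          rw [hfy]; linarith
        · rcases eq_or_ne v x with rfl | hvx
          · have hfv : f v = 1 := hfx
            rw [hfv]
            have := one_le_dist G hconn (hu.ne' : u ≠ v)
            linarith
          · have hnadjxv : ¬ G.Adj x v := fun h => no_triangle hgirth h hv.symm hxy.symm
            have hfv : f v = 0 := by
              have hvy : v ≠ y := hv.ne'
              simp [hfdef, hvx, hvy, hnadjxv]
            rw [hfv]
            have huv : u ≠ v := by
              rintro rfl; exact hnadjxv hu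
            have hnadjuv : ¬ G.Adj u v := fun h =>
              no_square hgirth hu h hv.symm hxy.symm (Ne.symm hvx) huy
            have := two_le_dist G hconn huv hnadjuv
            linarith
  have hval := le_W (exists_coupling_mass G hx hy h0 h1.le) f hf
  rw [finsum_mul_mass, finsum_mul_mass] at hval
  have hsumx : ∑ u ∈ G.neighborFinset x, f u = 2 * (deg G x : ℝ) - 2 := by
    have hpt : ∀ u ∈ G.neighborFinset x, f u = 2 - (if u = y then 2 else 0) := by
      intro u hu
      have hadj : G.Adj x u := by simpa using hu
      have hux : u ≠ x := hadj.ne'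
      rcases eq_or_ne u y with rfl | huy
      · rw [hfy]; simp
      · simp [hfdef, hux, huy, hadj]
    rw [Finset.sum_congr rfl hpt, Finset.sum_sub_distrib, Finset.sum_const,
      Finset.sum_ite_eq' (G.neighborFinset x) y (fun _ => (2:ℝ))]
    have hymem : y ∈ G.neighborFinset x := by simpa using hxy
    rw [if_pos hymem, deg_eq_card]
    simp [mul_comm]
  have hsumy : ∑ w ∈ G.neighborFinset y, f w = 1 := by
    have hpt : ∀ w ∈ G.neighborFinset y, f w = (if w = x then 1 else 0) := by
      intro w hw
      have hadj : G.Adj y w := by simpa using hw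
      have hwy : w ≠ y := hadj.ne'
      rcases eq_or_ne w x with rfl | hwx
      · rw [hfx, if_pos rfl]
      · have hnadj : ¬ G.Adj x w := fun h => no_triangle hgirth h hadj.symm hxy.symm
        simp [hfdef, hwx, hwy, hnadj]
    rw [Finset.sum_congr rfl hpt,
      Finset.sum_ite_eq' (G.neighborFinset y) x (fun _ => (1:ℝ))]
    have hxmem : x ∈ G.neighborFinset y := by simpa using hxy.symm
    rw [if_pos hxmem]
  rw [hsumx, hsumy, hfx, hfy] at hval
  have hApos : (0:ℝ) < (deg G x : ℝ) := by exact_mod_cast hx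
  have hBpos : (0:ℝ) < (deg G y : ℝ) := by exact_mod_cast hy
  have hspos : (0:ℝ) < 1 - α := by linarith
  rw [div_le_iff₀ hspos]
  show 1 - W G (mass G α x) (mass G α y) ≤ _
  have hkey : 1 - (α * 1 + (1 - α) / (deg G x : ℝ) * (2 * (deg G x : ℝ) - 2)
      - (α * 0 + (1 - α) / (deg G y : ℝ) * 1))
      = (2 / (deg G x : ℝ) + 1 / (deg G y : ℝ) - 1) * (1 - α) := by
    field_simp
    ring
  linarith

/-- Coupling lower bound on `κ_α` when `x` is a pendant vertex. -/
lemma kappa_pendant (hconn : G.Connected) (hxy : G.Adj x y) (hdx : deg G x = 1)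
    {α : ℝ} (hhalf : 1/2 ≤ α) (h1 : α < 1) :
    2 / (deg G y : ℝ) ≤ kappaAlpha G α x y / (1 - α) := by
  have hy := deg_pos_of_adj G hxy.symm
  have hxney : x ≠ y := hxy.ne
  have hNx : G.neighborFinset x = {y} := by
    have hcard : (G.neighborFinset x).card = 1 := by rw [← deg_eq_card, hdx]
    obtain ⟨z, hz⟩ := Finset.card_eq_one.mp hcard
    have hymem : y ∈ G.neighborFinset x := by simpa using hxy
    rw [hz] at hymem ⊢
    rw [Finset.mem_singleton] at hymem
    rw [hymem]
  have hadjx : ∀ u, G.Adj x u ↔ u = y := by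
    intro u
    rw [← SimpleGraph.mem_neighborFinset, hNx, Finset.mem_singleton]
  have hmxx : mass G α x x = α := by simp [mass]
  have hmxy : mass G α x y = 1 - α := by
    rw [mass, if_neg (Ne.symm hxney), if_pos hxy, hdx]
    norm_num
  have hmxu : ∀ u, u ≠ x → u ≠ y → mass G α x u = 0 := by
    intro u hux huy
    rw [mass, if_neg hux, if_neg (fun h => huy ((hadjx u).1 h))]
  have hmyy : mass G α y y = α := by simp [mass]
  set T₂ : Finset V := insert y (G.neighborFinset y) with hT₂
  set A : V → V → ℝ := fun u v =>
    if u = x then (if v = y then 2*α - 1 else mass G α y v)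
    else if u = y ∧ v = y then 1 - α else 0 with hAdef
  have hA_supp : ∀ u v, A u v ≠ 0 → (u = x ∨ u = y) ∧ v ∈ T₂ := by
    intro u v h
    rw [hAdef] at h
    dsimp only at h
    split_ifs at h with hux hvy hyy
    · exact ⟨Or.inl hux, by rw [hT₂, hvy]; exact Finset.mem_insert_self y _⟩
    · refine ⟨Or.inl hux, ?_⟩
      have := mass_support G y α (Function.mem_support.2 h)
      simpa [hT₂] using this
    · exact ⟨Or.inr hyy.1, by rw [hT₂, hyy.2]; exact Finset.mem_insert_self y _⟩
    · exact absurd rfl h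
  have hrowx : ∑ᶠ v, A x v = α := by
    have hfun : (A x) = fun v => mass G α y v + (if v = y then α - 1 else 0) := by
      funext v
      rw [hAdef]
      dsimp only
      rw [if_pos rfl]
      rcases eq_or_ne v y with rfl | hvy
      · rw [if_pos rfl, if_pos rfl, hmyy]; ring
      · rw [if_neg hvy, if_neg hvy, add_zero]
    rw [hfun, finsum_add_distrib (mass_support_finite G y α)
      ((Set.finite_singleton y).subset (fun v hv => by
        by_contra hc
        simp only [Function.mem_support] at hv
        rw [if_neg (by simpa using hc : v ≠ y)] at hv
        exact hv rfl)),
      mass_total G y α hy,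
      finsum_eq_single _ y (fun b hb => if_neg hb), if_pos rfl]
    ring
  have hcoup : IsCoupling (mass G α x) (mass G α y) A := by
    refine ⟨?_, ?_, ?_, ?_⟩
    · intro u v
      rw [hAdef]; dsimp only
      split_ifs
      · linarith
      · exact mass_nonneg G y α (by linarith) h1.le v
      · linarith
      · exact le_refl 0
    · apply Set.Finite.subset ((({x, y} : Finset V) ×ˢ T₂).finite_toSet)
      rintro ⟨u, v⟩ hp
      obtain ⟨hu, hv⟩ := hA_supp u v hp
      simp only [Finset.coe_product, Set.mem_prod, Finset.mem_coe, Finset.mem_insert,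
        Finset.mem_singleton]
      exact ⟨hu, hv⟩
    · intro u
      rcases eq_or_ne u x with rfl | hux
      · rw [hrowx, hmxx]
      · rcases eq_or_ne u y with rfl | huy
        · have hfun : A u = fun v => if v = u then 1 - α else 0 := by
            funext v
            rw [hAdef]; dsimp only
            rw [if_neg hux]
            rcases eq_or_ne v u with rfl | hvy
            · rw [if_pos ⟨rfl, rfl⟩, if_pos rfl]
            · rw [if_neg (fun hc => hvy hc.2), if_neg hvy]
          rw [hfun, finsum_eq_single _ u (fun b hb => if_neg hb), if_pos rfl, hmxy]
        · have hfun : A u = fun _ => (0:ℝ) := by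
            funext v
            rw [hAdef]; dsimp only
            rw [if_neg hux, if_neg (fun hc => huy hc.1)]
          rw [hfun, finsum_zero, hmxu u hux huy]
    · intro v
      have hsupp : Function.support (fun u => A u v) ⊆ ↑({x, y} : Finset V) := by
        intro u hu
        obtain ⟨h1, -⟩ := hA_supp u v hu
        simpa using h1
      rw [finsum_eq_sum_of_support_subset _ hsupp, Finset.sum_pair hxney]
      rcases eq_or_ne v y with rfl | hvy
      · rw [hAdef]; dsimp only
        rw [if_pos rfl, if_pos rfl, if_neg (Ne.symm hxney), if_pos ⟨rfl, rfl⟩, hmyy]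
        ring
      · rw [hAdef]; dsimp only
        rw [if_pos rfl, if_neg hvy, if_neg (Ne.symm hxney), if_neg (fun hc => hvy hc.2),
          add_zero]
  have hBpos : (0:ℝ) < (deg G y : ℝ) := by exact_mod_cast hy
  have hxmem : x ∈ G.neighborFinset y := by simpa using hxy.symm
  have hcost : ∑ᶠ p : V × V, A p.1 p.2 * (G.dist p.1 p.2 : ℝ)
      ≤ (2*α - 1) + 2*(1-α) * (((deg G y : ℝ) - 1) / (deg G y : ℝ)) := by
    have hsub : Function.support (fun p : V × V => A p.1 p.2 * (G.dist p.1 p.2 : ℝ))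
        ⊆ ↑(({x, y} : Finset V) ×ˢ T₂) := by
      rintro ⟨u, v⟩ hp
      have hAuv : A u v ≠ 0 := by
        intro hc
        simp only [Function.mem_support] at hp
        exact hp (by rw [hc, zero_mul])
      obtain ⟨hu, hv⟩ := hA_supp u v hAuv
      simp only [Finset.coe_product, Set.mem_prod, Finset.mem_coe, Finset.mem_insert,
        Finset.mem_singleton]
      exact ⟨hu, hv⟩
    rw [finsum_eq_sum_of_support_subset _ hsub, Finset.sum_product, Finset.sum_pair hxney]
    have hyzero : ∑ v ∈ T₂, A y v * (G.dist y v : ℝ) = 0 := by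
      apply Finset.sum_eq_zero
      intro v hv
      rcases eq_or_ne v y with rfl | hvy
      · rw [SimpleGraph.dist_self]; simp
      · have : A y v = 0 := by
          rw [hAdef]; dsimp only
          rw [if_neg (Ne.symm hxney), if_neg (fun hc => hvy hc.2)]
        rw [this, zero_mul]
    rw [hyzero, add_zero, hT₂, Finset.sum_insert (G.notMem_neighborFinset_self y)]
    have hAxy : A x y = 2*α - 1 := by rw [hAdef]; dsimp only; rw [if_pos rfl, if_pos rfl]
    rw [hAxy, dist_cast_adj G hxy, mul_one]
    have hterm : ∀ v ∈ G.neighborFinset y, A x v * (G.dist x v : ℝ)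
        ≤ (if v = x then 0 else 2*(1-α) / (deg G y : ℝ)) := by
      intro v hv
      have hadj : G.Adj y v := by simpa using hv
      have hvy : v ≠ y := hadj.ne'
      have hAxv : A x v = (1-α) / (deg G y : ℝ) := by
        rw [hAdef]; dsimp only
        rw [if_pos rfl, if_neg hvy, mass, if_neg hvy, if_pos hadj]
      rcases eq_or_ne v x with rfl | hvx
      · rw [if_pos rfl, SimpleGraph.dist_comm, SimpleGraph.dist_self]
        simp
      · rw [if_neg hvx, hAxv]
        have hd2 : (G.dist x v : ℝ) ≤ 2 := by
          have h := hconn.dist_triangle (u := x) (v := y) (w := v)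
          have hxy1 : G.dist x y = 1 := SimpleGraph.dist_eq_one_iff_adj.mpr hxy
          have hyv1 : G.dist y v = 1 := SimpleGraph.dist_eq_one_iff_adj.mpr hadj
          rw [hxy1, hyv1] at h
          exact_mod_cast h
        have hmn : (0:ℝ) ≤ (1-α) / (deg G y : ℝ) :=
          div_nonneg (by linarith) hBpos.le
        calc (1-α) / (deg G y : ℝ) * (G.dist x v : ℝ)
            ≤ (1-α) / (deg G y : ℝ) * 2 := mul_le_mul_of_nonneg_left hd2 hmn
          _ = 2*(1-α) / (deg G y : ℝ) := by ring
    have hsumbound : ∑ v ∈ G.neighborFinset y, A x v * (G.dist x v : ℝ)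
        ≤ 2*(1-α) * (((deg G y : ℝ) - 1) / (deg G y : ℝ)) := by
      refine le_trans (Finset.sum_le_sum hterm) (le_of_eq ?_)
      have hpt : ∀ v ∈ G.neighborFinset y,
          (if v = x then (0:ℝ) else 2*(1-α) / (deg G y : ℝ))
            = 2*(1-α) / (deg G y : ℝ) - (if v = x then 2*(1-α) / (deg G y : ℝ) else 0) := by
        intro v _
        split_ifs <;> ring
      rw [Finset.sum_congr rfl hpt, Finset.sum_sub_distrib, Finset.sum_const,
        Finset.sum_ite_eq' (G.neighborFinset y) x
          (fun _ => 2*(1-α) / (deg G y : ℝ)), if_pos hxmem, ← deg_eq_card]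
      field_simp [hBpos.ne']
      have hd : (deg G y : ℝ) ^ 2 * (deg G y : ℝ)⁻¹ = deg G y := by field_simp
      linear_combination (2 - 2 * α) * hd
    linarith
  have hW := le_trans (W_le hcoup) hcost
  have hspos : (0:ℝ) < 1 - α := by linarith
  rw [le_div_iff₀ hspos]
  show 2 / (deg G y : ℝ) * (1 - α) ≤ 1 - W G (mass G α x) (mass G α y)
  have heq : (2*α - 1) + 2*(1-α) * (((deg G y : ℝ) - 1) / (deg G y : ℝ))
      = 1 - 2 / (deg G y : ℝ) * (1 - α) := by
    field_simp
    ring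
  linarith

end Bounds

/-- In a connected, locally finite simple Ricci-flat graph
with girth at least 5 and at least two vertices, every vertex has degree
2, 3, or 4. -/
theorem degree_mem_of_ricciFlat_girth_ge_five
    {V : Type*} (G : SimpleGraph V) [G.LocallyFinite]
    (hconn : G.Connected) (hflat : RicciFlat G) (hgirth : 5 ≤ G.girth)
    (htwo : ∃ a b : V, a ≠ b) :
    ∀ v : V, deg G v = 2 ∨ deg G v = 3 ∨ deg G v = 4 := by
  intro v
  -- `v` has a neighbor
  obtain ⟨y, hxy⟩ : ∃ w, G.Adj v w := by
    obtain ⟨a, b, hab⟩ := htwo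
    have hex : ∃ u, u ≠ v := by
      rcases eq_or_ne a v with rfl | h
      · exact ⟨b, fun hc => hab hc.symm⟩
      · exact ⟨a, h⟩
    obtain ⟨u, hu⟩ := hex
    obtain ⟨p⟩ := hconn.preconnected v u
    cases p with
    | nil => exact absurd rfl hu
    | cons h _ => exact ⟨_, h⟩
  have hdv : 1 ≤ deg G v := deg_pos_of_adj G hxy
  have hdy : 1 ≤ deg G y := deg_pos_of_adj G hxy.symm
  -- helper: a pendant endpoint of an edge contradicts flatness
  have pendant_contra : ∀ p q : V, G.Adj p q → deg G p = 1 → False := by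
    intro p q hpq hp1
    have hric : ricci G p q = 0 := hflat p q hpq
    have ht := kappa_tendsto G hconn hpq
    rw [hric] at ht
    have hev : ∀ᶠ α in 𝓝[<] (1:ℝ),
        2 / (deg G q : ℝ) ≤ kappaAlpha G α p q / (1 - α) := by
      refine Filter.eventually_of_mem
        (Ioo_mem_nhdsLT_of_mem (show (1:ℝ) ∈ Set.Ioc (1/2) 1 by norm_num)) ?_
      intro α hα
      exact kappa_pendant G hconn hpq hp1 hα.1.le hα.2
    have hle := ge_of_tendsto ht hev
    have hq : 0 < deg G q := deg_pos_of_adj G hpq.symm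
    have : (0:ℝ) < 2 / (deg G q : ℝ) := by
      apply div_pos (by norm_num)
      exact_mod_cast hq
    linarith
  rcases Nat.lt_or_ge (deg G v) 5 with h5 | h5
  · have : deg G v = 1 ∨ deg G v = 2 ∨ deg G v = 3 ∨ deg G v = 4 := by omega
    rcases this with h1 | h | h | h
    · exact absurd (pendant_contra v y hxy h1) not_false
    · exact Or.inl h
    · exact Or.inr (Or.inl h)
    · exact Or.inr (Or.inr h)
  · exfalso
    rcases eq_or_ne (deg G y) 1 with hy1 | hy1
    · exact pendant_contra y v hxy.symm hy1
    · have hy2 : 2 ≤ deg G y := by omega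
      have hric : ricci G v y = 0 := hflat v y hxy
      have ht := kappa_tendsto G hconn hxy
      rw [hric] at ht
      have hev : ∀ᶠ α in 𝓝[<] (1:ℝ),
          kappaAlpha G α v y / (1 - α) ≤ 2 / (deg G v : ℝ) + 1 / (deg G y : ℝ) - 1 := by
        refine Filter.eventually_of_mem
          (Ioo_mem_nhdsLT_of_mem (show (1:ℝ) ∈ Set.Ioc (0:ℝ) 1 by norm_num)) ?_
        intro α hα
        exact kappa_upper G hconn hgirth hxy hα.1.le hα.2
      have hle := le_of_tendsto ht hev
      have hA5 : (5:ℝ) ≤ (deg G v : ℝ) := by exact_mod_cast h5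
      have hB2 : (2:ℝ) ≤ (deg G y : ℝ) := by exact_mod_cast hy2
      have hApos : (0:ℝ) < (deg G v : ℝ) := by linarith
      have hBpos : (0:ℝ) < (deg G y : ℝ) := by linarith
      have h2a : 2 / (deg G v : ℝ) ≤ 2 / 5 := by
        rw [div_le_div_iff₀ hApos (by norm_num)]
        linarith
      have h1b : 1 / (deg G y : ℝ) ≤ 1 / 2 := by
        rw [div_le_div_iff₀ hBpos (by norm_num)]
        linarith
      linarith

end RicciFlatPaper

end
end
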